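/- arXiv:2208.02842 — 7 statements merged into one kernel-verified Lean document; each statement's English description precedes it below -/
import Mathlib

section
/- In the general demand model, assume q₀ ∈ (0,1), q₁ > 0, and Σ_{i≥2} q_i > 0. Then for every T ≥ 1 one has δ·V(1,T−1) < P*(2,T) < p̄. -/
/-- General demand duopoly: with `q₀ ∈ (0,1)`, `q₁ > 0` and `Σ_{i≥2} qᵢ > 0`, the minimum
acceptable price satisfies `δ V(1,T-1) < P*(2,T) < p̄` for every `T ≥ 1`. -/
theorem stmt6 (q : ℕ → ℝ) (δ pbar : ℝ)
    (hqnn : ∀ i, 0 ≤ q i) (hqsummable : Summable q) (hqsum : ∑' i, q i = 1)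
    (hq0pos : 0 < q 0) (hq0 : q 0 < 1) (hq1pos : 0 < q 1)
    (htail : 0 < ∑' i, q (2 + i))
    (hδ0 : 0 < δ) (hδ1 : δ ≤ 1) (hpbar : 0 < pbar)
    (V : ℕ → ℕ → ℝ)
    (hV0 : ∀ N : ℕ, 1 ≤ N → V N 0 = 0)
    (hVrec : ∀ N T : ℕ, 1 ≤ N → 1 ≤ T →
      V N T = ∑ i ∈ Finset.range N, q i * δ * V (N - i) (T - 1) + (∑' i, q (N + i)) * pbar) :
    ∀ T : ℕ, 1 ≤ T →
      δ * V 1 (T - 1) < (V 2 T - q 0 * δ * V 2 (T - 1)) / (1 - q 0) ∧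
      (V 2 T - q 0 * δ * V 2 (T - 1)) / (1 - q 0) < pbar := by
  have hS1 : Summable (fun i => q (1 + i)) := by
    have := (summable_nat_add_iff 1).mpr hqsummable
    simpa [add_comm] using this
  have hS2 : Summable (fun i => q (2 + i)) := by
    have := (summable_nat_add_iff 2).mpr hqsummable
    simpa [add_comm] using this
  set Q1 := ∑' i, q (1 + i) with hQ1def
  set Q2 := ∑' i, q (2 + i) with hQ2def
  have hsplit0 : q 0 + Q1 = 1 := by
    have h := Summable.tsum_eq_zero_add hqsummable
    rw [hqsum] at h
    have : (∑' b : ℕ, q (b + 1)) = Q1 := tsum_congr fun b => by rw [add_comm]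
    linarith [h, this]
  have hsplit1 : Q1 = q 1 + Q2 := by
    have h := Summable.tsum_eq_zero_add hS1
    have h2 : (∑' b : ℕ, q (1 + (b + 1))) = Q2 := tsum_congr fun b => by ring_nf
    simpa [h2] using h
  have hQ1nn : 0 ≤ Q1 := tsum_nonneg fun i => hqnn _
  -- V 1 is nonneg and < pbar
  have hV1 : ∀ t : ℕ, 0 ≤ V 1 t ∧ V 1 t < pbar := by
    intro t
    induction t with
    | zero => rw [hV0 1 (le_refl 1)]; exact ⟨le_refl 0, hpbar⟩
    | succ t ih =>
      have h := hVrec 1 (t + 1) (by norm_num) (by norm_num)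
      simp only [Finset.sum_range_one, Nat.add_sub_cancel] at h
      have h1 : V 1 (t + 1) = q 0 * δ * V 1 t + Q1 * pbar := by
        rw [h]
      obtain ⟨ih0, ihlt⟩ := ih
      constructor
      · rw [h1]; positivity
      · have hδV : δ * V 1 t ≤ V 1 t := by nlinarith
        nlinarith [mul_le_mul_of_nonneg_left hδV (le_of_lt hq0pos)]
  intro T hT
  obtain ⟨t, rfl⟩ : ∃ t, T = t + 1 := ⟨T - 1, by omega⟩
  have h := hVrec 2 (t + 1) (by norm_num) (by norm_num)
  rw [Finset.sum_range_succ, Finset.sum_range_one] at h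
  norm_num at h
  -- h : V 2 (t+1) = q 0 * δ * V 2 t + q 1 * δ * V 1 t + Q2 * pbar
  have hnum : V 2 (t + 1) - q 0 * δ * V 2 (t + 1 - 1) = q 1 * δ * V 1 t + Q2 * pbar := by
    simp only [Nat.add_sub_cancel]
    rw [h]; ring
  have hden : 1 - q 0 = q 1 + Q2 := by linarith
  have hdenpos : (0:ℝ) < q 1 + Q2 := by linarith
  obtain ⟨hV1nn, hV1lt⟩ := hV1 t
  have ha : δ * V 1 t < pbar := by nlinarith
  have ha0 : 0 ≤ δ * V 1 t := by positivity
  simp only [Nat.add_sub_cancel] at hnum ⊢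
  rw [hnum, hden]
  constructor
  · rw [lt_div_iff₀ hdenpos]
    nlinarith
  · rw [div_lt_iff₀ hdenpos]
    nlinarith
end

section
/- In the general demand duopoly with q₁ > 0 and any fixed T ≥ 1, for every real p ≠ δ·V(1,T−1) the function W_T is differentiable at p with derivative (1−q₀)·(P*(2,T) − δ·V(1,T−1))/(q₁·(p − δ·V(1,T−1))²). In particular, if moreover q₀ ∈ (0,1) and Σ_{i≥2} q_i > 0, this derivative is strictly positive for every p ∈ (P*(2,T), p̄). -/
/-!
`W_T` is a Möbius function of `p`, so its derivative is a constant over `(p - δ V(1,T-1))²`.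
For positivity, the recursion gives `V(2,T) - q₀ δ V(2,T-1) = q₁ c + (Σ_{i≥2} qᵢ) p̄` with
`c = δ V(1,T-1)`, so `P*(2,T)` is a proper convex combination of `c` and `p̄`; it therefore lies
strictly above `c` as soon as `c < p̄`, which holds by induction on the monopoly recursion
`V(1,t+1) = q₀ δ V(1,t) + (1 - q₀) p̄`.
-/

open Finset

theorem hasDerivAt_of_eq_div_affine {f : ℝ → ℝ} {a b c k x : ℝ} (hk : k ≠ 0)
    (hf : ∀ y, y ≠ c → f y = (a - b * y) / (k * (c - y))) (hx : x ≠ c) :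
    HasDerivAt f ((a - b * c) / (k * (x - c) ^ 2)) x := by
  have hcx : c - x ≠ 0 := sub_ne_zero.mpr hx.symm
  have hnum : HasDerivAt (fun y => a - b * y) (-b) x := by
    simpa using ((hasDerivAt_id x).const_mul b).const_sub a
  have hden : HasDerivAt (fun y => k * (c - y)) (-k) x := by
    simpa using ((hasDerivAt_id x).const_sub c).const_mul k
  have hfx : f =ᶠ[nhds x] fun y => (a - b * y) / (k * (c - y)) := by
    filter_upwards [isOpen_ne.mem_nhds hx] with y hy using hf y hy
  refine ((hnum.div hden (mul_ne_zero hk hcx)).congr_of_eventuallyEq hfx).congr_deriv ?_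
  field_simp
  ring

theorem lt_div_add_of_lt {w₁ w₂ c p : ℝ} (hw₁ : 0 ≤ w₁) (hw₂ : 0 < w₂) (hcp : c < p) :
    c < (w₁ * c + w₂ * p) / (w₁ + w₂) := by
  rw [lt_div_iff₀ (by positivity)]
  nlinarith

theorem mul_lt_of_affine_rec {v : ℕ → ℝ} {a δ b : ℝ} (ha : 0 < a) (hδ0 : 0 < δ) (hδ1 : δ ≤ 1)
    (hb : 0 < b) (h0 : v 0 = 0) (hrec : ∀ t, v (t + 1) = a * δ * v t + (1 - a) * b) :
    ∀ t, δ * v t < b := by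
  intro t
  induction t with
  | zero => simpa [h0] using hb
  | succ t ih =>
    calc δ * v (t + 1) = a * δ * (δ * v t) + δ * (1 - a) * b := by rw [hrec]; ring
      _ < a * δ * b + δ * (1 - a) * b := by gcongr
      _ = δ * b := by ring
      _ ≤ b := mul_le_of_le_one_left hb.le hδ1

section DemandModel

variable {q : ℕ → ℝ} {δ pbar : ℝ} {V : ℕ → ℕ → ℝ}

theorem tsum_nat_add_eq_one_sub_sum (hs : Summable q) (h1 : ∑' i, q i = 1) (n : ℕ) :
    ∑' i, q (n + i) = 1 - ∑ i ∈ range n, q i := by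
  have h := hs.sum_add_tsum_nat_add n
  simp only [h1, add_comm _ n] at h
  linarith

variable (hVrec : ∀ N T : ℕ, 1 ≤ N → 1 ≤ T →
    V N T = ∑ i ∈ range N, q i * δ * V (N - i) (T - 1) + (∑' i, q (N + i)) * pbar)
include hVrec

theorem monopoly_value_succ (hs : Summable q) (h1 : ∑' i, q i = 1) (t : ℕ) :
    V 1 (t + 1) = q 0 * δ * V 1 t + (1 - q 0) * pbar := by
  simpa [tsum_nat_add_eq_one_sub_sum hs h1] using hVrec 1 (t + 1) le_rfl (by omega)

theorem duopoly_value_sub {T : ℕ} (hT : 1 ≤ T) :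
    V 2 T - q 0 * δ * V 2 (T - 1) =
      q 1 * (δ * V 1 (T - 1)) + (∑' i, q (2 + i)) * pbar := by
  rw [hVrec 2 T (by norm_num) hT]
  simp only [sum_range_succ, range_one, sum_singleton, tsub_zero, Nat.add_one_sub_one]
  ring

end DemandModel

theorem stmt8_general (q : ℕ → ℝ) (δ pbar : ℝ)
    (hqsummable : Summable q) (hqsum : ∑' i, q i = 1)
    (hq0 : q 0 < 1) (hq1pos : 0 < q 1)
    (hδ0 : 0 < δ) (hδ1 : δ ≤ 1) (hpbar : 0 < pbar)
    (V : ℕ → ℕ → ℝ)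
    (hV0 : ∀ N : ℕ, 1 ≤ N → V N 0 = 0)
    (hVrec : ∀ N T : ℕ, 1 ≤ N → 1 ≤ T →
      V N T = ∑ i ∈ Finset.range N, q i * δ * V (N - i) (T - 1) + (∑' i, q (N + i)) * pbar)
    (T : ℕ) (hT : 1 ≤ T)
    (W : ℝ → ℝ)
    (hW : ∀ p : ℝ, p ≠ δ * V 1 (T - 1) →
      W p = (V 2 T - q 0 * δ * V 2 (T - 1) - (1 - q 0) * p) /
        (q 1 * (δ * V 1 (T - 1) - p))) :
    (∀ p : ℝ, p ≠ δ * V 1 (T - 1) →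
      HasDerivAt W
        ((1 - q 0) * ((V 2 T - q 0 * δ * V 2 (T - 1)) / (1 - q 0) - δ * V 1 (T - 1)) /
          (q 1 * (p - δ * V 1 (T - 1)) ^ 2)) p) ∧
    (0 < q 0 → 0 < ∑' i, q (2 + i) →
      ∀ p : ℝ, (V 2 T - q 0 * δ * V 2 (T - 1)) / (1 - q 0) < p → p < pbar →
        0 < (1 - q 0) * ((V 2 T - q 0 * δ * V 2 (T - 1)) / (1 - q 0) - δ * V 1 (T - 1)) /
          (q 1 * (p - δ * V 1 (T - 1)) ^ 2)) := by
  have hq0' : 0 < 1 - q 0 := sub_pos.mpr hq0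
  refine ⟨fun p hp => ?_, fun hq0pos htail p hPp _ => ?_⟩
  · rw [mul_sub, mul_div_cancel₀ _ hq0'.ne']
    exact hasDerivAt_of_eq_div_affine hq1pos.ne' hW hp
  · have hc : δ * V 1 (T - 1) < pbar :=
      mul_lt_of_affine_rec hq0pos hδ0 hδ1 hpbar (hV0 1 le_rfl)
        (monopoly_value_succ hVrec hqsummable hqsum) (T - 1)
    have hweights : q 1 + ∑' i, q (2 + i) = 1 - q 0 := by
      rw [tsum_nat_add_eq_one_sub_sum hqsummable hqsum 2]
      simp only [sum_range_succ, range_one, sum_singleton]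
      ring
    have hcP : δ * V 1 (T - 1) < (V 2 T - q 0 * δ * V 2 (T - 1)) / (1 - q 0) := by
      rw [duopoly_value_sub hVrec hT, ← hweights]
      exact lt_div_add_of_lt hq1pos.le htail hc
    have hcp : 0 < p - δ * V 1 (T - 1) := by linarith
    exact div_pos (mul_pos hq0' (sub_pos.mpr hcP)) (by positivity)

/-- General demand duopoly: away from `δ V(1,T-1)` the map `W_T` is differentiable with
derivative `(1-q₀)(P*(2,T) - δ V(1,T-1)) / (q₁ (p - δ V(1,T-1))²)`; moreover, if
`q₀ ∈ (0,1)` and `Σ_{i≥2} qᵢ > 0`, this derivative is strictly positive on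
`(P*(2,T), p̄)`. -/
theorem stmt8 (q : ℕ → ℝ) (δ pbar : ℝ)
    (hqnn : ∀ i, 0 ≤ q i) (hqsummable : Summable q) (hqsum : ∑' i, q i = 1)
    (hq0 : q 0 < 1) (hq1pos : 0 < q 1)
    (hδ0 : 0 < δ) (hδ1 : δ ≤ 1) (hpbar : 0 < pbar)
    (V : ℕ → ℕ → ℝ)
    (hV0 : ∀ N : ℕ, 1 ≤ N → V N 0 = 0)
    (hVrec : ∀ N T : ℕ, 1 ≤ N → 1 ≤ T →
      V N T = ∑ i ∈ Finset.range N, q i * δ * V (N - i) (T - 1) + (∑' i, q (N + i)) * pbar)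
    (T : ℕ) (hT : 1 ≤ T)
    (W : ℝ → ℝ)
    (hW : ∀ p : ℝ, p ≠ δ * V 1 (T - 1) →
      W p = (V 2 T - q 0 * δ * V 2 (T - 1) - (1 - q 0) * p) /
        (q 1 * (δ * V 1 (T - 1) - p))) :
    (∀ p : ℝ, p ≠ δ * V 1 (T - 1) →
      HasDerivAt W
        ((1 - q 0) * ((V 2 T - q 0 * δ * V 2 (T - 1)) / (1 - q 0) - δ * V 1 (T - 1)) /
          (q 1 * (p - δ * V 1 (T - 1)) ^ 2)) p) ∧
    (0 < q 0 → 0 < ∑' i, q (2 + i) →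
      ∀ p : ℝ, (V 2 T - q 0 * δ * V 2 (T - 1)) / (1 - q 0) < p → p < pbar →
        0 < (1 - q 0) * ((V 2 T - q 0 * δ * V 2 (T - 1)) / (1 - q 0) - δ * V 1 (T - 1)) /
          (q 1 * (p - δ * V 1 (T - 1)) ^ 2)) :=
  stmt8_general q δ pbar hqsummable hqsum hq0 hq1pos hδ0 hδ1 hpbar V hV0 hVrec T hT W hW
end

section
/- In the general demand duopoly, assume q₀ ∈ (0,1), q₁ > 0, and Σ_{i≥2} q_i > 0, and let T ≥ 1. Then the restriction of W_T to the interval [P*(2,T), p̄] is continuous, strictly increasing, and a bijection onto [0,1]; in particular W_T is a valid cumulative distribution function supported on [P*(2,T), p̄]. -/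
/-- General demand duopoly: on `[P*(2,T), p̄]` the strategy `W_T` is continuous, strictly
increasing, and a bijection onto `[0,1]`, i.e. a valid CDF supported on `[P*(2,T), p̄]`. -/
theorem stmt9 (q : ℕ → ℝ) (δ pbar : ℝ)
    (hqnn : ∀ i, 0 ≤ q i) (hqsummable : Summable q) (hqsum : ∑' i, q i = 1)
    (hq0pos : 0 < q 0) (hq0 : q 0 < 1) (hq1pos : 0 < q 1)
    (htail : 0 < ∑' i, q (2 + i))
    (hδ0 : 0 < δ) (hδ1 : δ ≤ 1) (hpbar : 0 < pbar)
    (V : ℕ → ℕ → ℝ)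
    (hV0 : ∀ N : ℕ, 1 ≤ N → V N 0 = 0)
    (hVrec : ∀ N T : ℕ, 1 ≤ N → 1 ≤ T →
      V N T = ∑ i ∈ Finset.range N, q i * δ * V (N - i) (T - 1) + (∑' i, q (N + i)) * pbar)
    (T : ℕ) (hT : 1 ≤ T)
    (Pstar : ℝ) (hPstar : Pstar = (V 2 T - q 0 * δ * V 2 (T - 1)) / (1 - q 0))
    (W : ℝ → ℝ)
    (hW : ∀ p : ℝ, p ≠ δ * V 1 (T - 1) →
      W p = (V 2 T - q 0 * δ * V 2 (T - 1) - (1 - q 0) * p) /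
        (q 1 * (δ * V 1 (T - 1) - p))) :
    ContinuousOn W (Set.Icc Pstar pbar) ∧
    StrictMonoOn W (Set.Icc Pstar pbar) ∧
    Set.BijOn W (Set.Icc Pstar pbar) (Set.Icc 0 1) := by
  -- tail sums
  have hs1 : Summable (fun i => q (1 + i)) := by
    simpa [add_comm] using (summable_nat_add_iff 1).mpr hqsummable
  have htail1 : ∑' i, q (1 + i) = 1 - q 0 := by
    have h := Summable.tsum_eq_zero_add hqsummable
    rw [hqsum] at h
    have h2 : ∑' i, q (i + 1) = ∑' i, q (1 + i) := tsum_congr fun i => by rw [add_comm]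
    rw [h2] at h; linarith
  have htail2 : ∑' i, q (2 + i) = 1 - q 0 - q 1 := by
    have h := Summable.tsum_eq_zero_add hs1
    rw [htail1] at h
    have h2 : ∑' i, q (1 + (i + 1)) = ∑' i, q (2 + i) :=
      tsum_congr fun i => by congr 1; omega
    simp only [add_zero] at h
    rw [h2] at h; linarith
  have ht2 : 0 < 1 - q 0 - q 1 := htail2 ▸ htail
  have hc : 0 < 1 - q 0 := by linarith
  set c : ℝ := 1 - q 0 with hcdef
  -- basic facts about V 1
  have hV1 : ∀ t : ℕ, 0 ≤ V 1 t ∧ δ * V 1 t < pbar := by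
    intro t
    induction t with
    | zero =>
      rw [hV0 1 le_rfl]
      constructor
      · exact le_rfl
      · simpa using hpbar
    | succ n ih =>
      have hrec := hVrec 1 (n + 1) le_rfl (by omega)
      simp only [Finset.sum_range_one, Nat.add_sub_cancel, Nat.sub_zero] at hrec
      rw [htail1] at hrec
      obtain ⟨ih1, ih2⟩ := ih
      have hV1n : V 1 (n + 1) = q 0 * δ * V 1 n + (1 - q 0) * pbar := by
        simpa using hrec
      constructor
      · rw [hV1n]
        have : 0 ≤ q 0 * δ * V 1 n := by positivity
        nlinarith
      · rw [hV1n]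
        have h1 : q 0 * (δ * V 1 n) < q 0 * pbar := by
          exact mul_lt_mul_of_pos_left ih2 hq0pos
        have h2 : δ * (q 0 * δ * V 1 n + (1 - q 0) * pbar)
            ≤ q 0 * δ * V 1 n + (1 - q 0) * pbar := by
          have hx : 0 ≤ q 0 * δ * V 1 n + (1 - q 0) * pbar := by positivity
          nlinarith
        nlinarith
  set B : ℝ := δ * V 1 (T - 1) with hBdef
  have hB0 : 0 ≤ B := by
    have := (hV1 (T - 1)).1; positivity
  have hBp : B < pbar := (hV1 (T - 1)).2
  -- the key identity for the numerator
  have hrec2 := hVrec 2 T (by omega) hT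
  have hA : V 2 T - q 0 * δ * V 2 (T - 1) = q 1 * B + (1 - q 0 - q 1) * pbar := by
    rw [htail2] at hrec2
    rw [Finset.sum_range_succ, Finset.sum_range_one] at hrec2
    norm_num at hrec2
    rw [hrec2]; ring
  set A : ℝ := q 1 * B + (1 - q 0 - q 1) * pbar with hAdef
  have hPA : c * Pstar = A := by
    rw [hPstar, ← hA]
    field_simp
  clear_value c B A
  -- ordering of the key points
  have hPB : B < Pstar := by
    have : c * Pstar - c * B = (1 - q 0 - q 1) * (pbar - B) := by
      rw [hPA, hAdef, hcdef]; ring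
    nlinarith [mul_pos ht2 (sub_pos.mpr hBp)]
  have hPp : Pstar < pbar := by
    have : c * pbar - c * Pstar = q 1 * (pbar - B) := by
      rw [hPA, hAdef, hcdef]; ring
    nlinarith [mul_pos hq1pos (sub_pos.mpr hBp)]
  -- rewrite W on the interval in positive form
  have hW' : ∀ p ∈ Set.Icc Pstar pbar, W p = (c * p - A) / (q 1 * (p - B)) := by
    intro p hp
    have hpB : B < p := lt_of_lt_of_le hPB hp.1
    rw [hW p (by intro h; rw [h] at hpB; exact lt_irrefl B hpB)]
    rw [hA]
    rw [show A - c * p = -(c * p - A) by ring, show q 1 * (B - p) = -(q 1 * (p - B)) by ring,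
      neg_div_neg_eq]
  have hdpos : ∀ p ∈ Set.Icc Pstar pbar, 0 < q 1 * (p - B) := by
    intro p hp
    exact mul_pos hq1pos (sub_pos.mpr (lt_of_lt_of_le hPB hp.1))
  -- positivity of the constant governing monotonicity
  have hAcB : 0 < A - c * B := by
    have : A - c * B = c * Pstar - c * B := by rw [hPA]
    rw [this]
    have := mul_lt_mul_of_pos_left hPB hc
    linarith
  -- continuity
  have hcont : ContinuousOn W (Set.Icc Pstar pbar) := by
    apply ContinuousOn.congr (f := fun p => (c * p - A) / (q 1 * (p - B)))
    · apply ContinuousOn.div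
      · fun_prop
      · fun_prop
      · intro p hp; exact ne_of_gt (hdpos p hp)
    · intro p hp; exact hW' p hp
  -- strict monotonicity
  have hmono : StrictMonoOn W (Set.Icc Pstar pbar) := by
    intro p1 h1 p2 h2 hlt
    rw [hW' p1 h1, hW' p2 h2]
    rw [div_lt_div_iff₀ (hdpos p1 h1) (hdpos p2 h2)]
    nlinarith [mul_pos (mul_pos hq1pos hAcB) (sub_pos.mpr hlt)]
  -- endpoint values
  have hWP : W Pstar = 0 := by
    rw [hW' Pstar ⟨le_rfl, hPp.le⟩]
    rw [show c * Pstar - A = 0 by rw [hPA]; ring]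
    simp
  have hWp : W pbar = 1 := by
    rw [hW' pbar ⟨hPp.le, le_rfl⟩]
    rw [div_eq_one_iff_eq (ne_of_gt (hdpos pbar ⟨hPp.le, le_rfl⟩))]
    rw [hAdef, hcdef]; ring
  refine ⟨hcont, hmono, ?_, hmono.injOn, ?_⟩
  · -- MapsTo
    intro p hp
    constructor
    · rw [hW' p hp]
      apply div_nonneg _ (hdpos p hp).le
      have : c * Pstar ≤ c * p := mul_le_mul_of_nonneg_left hp.1 hc.le
      linarith [hPA]
    · rw [hW' p hp]
      rw [div_le_one (hdpos p hp)]
      have hkey : c * p - A - q 1 * (p - B) = (1 - q 0 - q 1) * (p - pbar) := by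
        rw [hAdef, hcdef]; ring
      have h3 : (1 - q 0 - q 1) * (p - pbar) ≤ 0 :=
        mul_nonpos_of_nonneg_of_nonpos (by linarith) (by linarith [hp.2])
      linarith
  · -- SurjOn
    intro y hy
    have := intermediate_value_Icc hPp.le hcont
    rw [hWP, hWp] at this
    exact this hy
end

section
/- In the general demand duopoly, assume q₀ ∈ (0,1), q₁ > 0, and Σ_{i≥2} q_i > 0, and let T ≥ 1. Define W̄_T(p) := 0 for p ≤ P*(2,T), W̄_T(p) := W_T(p) for P*(2,T) < p < p̄, and W̄_T(p) := 1 for p ≥ p̄, and define the expected profit against an opponent playing W̄_T by Π(p) := q₀·δ·V(2,T−1) + q₁·(W̄_T(p)·δ·V(1,T−1) + (1−W̄_T(p))·p) + (Σ_{i≥2} q_i)·p. Then Π(p) = V(2,T) for every p ∈ [P*(2,T), p̄], and Π(p) < V(2,T) for every p < P*(2,T). In particular, playing the mixed strategy W̄_T is a best response to itself and yields expected profit V(2,T). -/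
/-- General demand duopoly: against an opponent playing the mixed strategy `W̄_T`, the
expected profit `Π(p)` equals `V(2,T)` on `[P*(2,T), p̄]` and is strictly below `V(2,T)`
for `p < P*(2,T)`; hence `W̄_T` is a best response to itself with value `V(2,T)`. -/
theorem stmt10 (q : ℕ → ℝ) (δ pbar : ℝ)
    (hqnn : ∀ i, 0 ≤ q i) (hqsummable : Summable q) (hqsum : ∑' i, q i = 1)
    (hq0pos : 0 < q 0) (hq0 : q 0 < 1) (hq1pos : 0 < q 1)
    (htail : 0 < ∑' i, q (2 + i))
    (hδ0 : 0 < δ) (hδ1 : δ ≤ 1) (hpbar : 0 < pbar)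
    (V : ℕ → ℕ → ℝ)
    (hV0 : ∀ N : ℕ, 1 ≤ N → V N 0 = 0)
    (hVrec : ∀ N T : ℕ, 1 ≤ N → 1 ≤ T →
      V N T = ∑ i ∈ Finset.range N, q i * δ * V (N - i) (T - 1) + (∑' i, q (N + i)) * pbar)
    (T : ℕ) (hT : 1 ≤ T)
    (Pstar : ℝ) (hPstar : Pstar = (V 2 T - q 0 * δ * V 2 (T - 1)) / (1 - q 0))
    (Wbar : ℝ → ℝ)
    (hWbar1 : ∀ p : ℝ, p ≤ Pstar → Wbar p = 0)
    (hWbar2 : ∀ p : ℝ, Pstar < p → p < pbar →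
      Wbar p = (V 2 T - q 0 * δ * V 2 (T - 1) - (1 - q 0) * p) /
        (q 1 * (δ * V 1 (T - 1) - p)))
    (hWbar3 : ∀ p : ℝ, pbar ≤ p → Wbar p = 1)
    (Pi : ℝ → ℝ)
    (hPi : ∀ p : ℝ, Pi p = q 0 * δ * V 2 (T - 1) +
      q 1 * (Wbar p * (δ * V 1 (T - 1)) + (1 - Wbar p) * p) +
      (∑' i, q (2 + i)) * p) :
    (∀ p ∈ Set.Icc Pstar pbar, Pi p = V 2 T) ∧
    (∀ p : ℝ, p < Pstar → Pi p < V 2 T) := by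
  -- tail sums
  have hC : (∑' i, q (2 + i)) = 1 - q 0 - q 1 := by
    have h := Summable.sum_add_tsum_nat_add 2 hqsummable
    have h2 : (∑' i, q (2 + i)) = ∑' i, q (i + 2) :=
      tsum_congr fun i => by rw [add_comm]
    have hr : ∑ i ∈ Finset.range 2, q i = q 0 + q 1 := by
      simp [Finset.sum_range_succ]
    rw [h2]; rw [hr, hqsum] at h; linarith
  have hC1 : (∑' i, q (1 + i)) = 1 - q 0 := by
    have h := Summable.sum_add_tsum_nat_add 1 hqsummable
    have h2 : (∑' i, q (1 + i)) = ∑' i, q (i + 1) :=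
      tsum_congr fun i => by rw [add_comm]
    rw [h2]; simp [hqsum] at h; linarith
  have h1q0 : 0 < 1 - q 0 := by linarith
  have htail' : 0 < 1 - q 0 - q 1 := hC ▸ htail
  -- V 1 bounds
  have hV1 : ∀ t : ℕ, 0 ≤ V 1 t ∧ V 1 t ≤ pbar := by
    intro t
    induction t with
    | zero => simp [hV0 1 le_rfl, hpbar.le]
    | succ n ih =>
      have hrec := hVrec 1 (n + 1) le_rfl (by omega)
      simp only [Nat.add_sub_cancel] at hrec
      rw [Finset.sum_range_one, hC1] at hrec
      simp only [Nat.sub_zero] at hrec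
      constructor
      · rw [hrec]
        have h1 : 0 ≤ q 0 * δ * V 1 n := by
          have := ih.1; have := hqnn 0; positivity
        nlinarith
      · rw [hrec]
        have hδV : δ * V 1 n ≤ pbar := by nlinarith [ih.1, ih.2]
        nlinarith [mul_le_mul_of_nonneg_left hδV hq0pos.le]
  -- recursion for V 2 T
  have hVT : V 2 T = q 0 * δ * V 2 (T - 1) + q 1 * δ * V 1 (T - 1)
      + (1 - q 0 - q 1) * pbar := by
    have hrec := hVrec 2 T (by omega) hT
    rw [Finset.sum_range_succ, Finset.sum_range_one, hC] at hrec
    norm_num at hrec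
    linarith [hrec]
  have hPmul : (1 - q 0) * Pstar = V 2 T - q 0 * δ * V 2 (T - 1) := by
    rw [hPstar]; field_simp
  have hδV1 : δ * V 1 (T - 1) ≤ Pstar := by
    have h1 := (hV1 (T - 1)).1
    have h2 := (hV1 (T - 1)).2
    have hδV : δ * V 1 (T - 1) ≤ pbar := by nlinarith
    have key : (1 - q 0) * (δ * V 1 (T - 1)) ≤ (1 - q 0) * Pstar := by
      nlinarith [mul_nonneg htail'.le (sub_nonneg.mpr hδV)]
    exact le_of_mul_le_mul_left key h1q0
  constructor
  · rintro p ⟨hpl, hpu⟩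
    by_cases hp1 : pbar ≤ p
    · have hpe : p = pbar := le_antisymm hpu hp1
      rw [hPi, hWbar3 p hp1, hpe, hC, hVT]; ring
    · push_neg at hp1
      by_cases hp2 : p ≤ Pstar
      · have hpe : p = Pstar := le_antisymm hp2 hpl
        rw [hPi, hWbar1 p hp2, hpe, hC]
        nlinarith [hPmul]
      · push_neg at hp2
        rw [hPi, hWbar2 p hp2 hp1, hC]
        have hd : δ * V 1 (T - 1) - p ≠ 0 := by
          have : δ * V 1 (T - 1) < p := lt_of_le_of_lt hδV1 hp2
          linarith
        field_simp
        ring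
  · intro p hp
    rw [hPi, hWbar1 p hp.le, hC]
    have : (1 - q 0) * p < (1 - q 0) * Pstar :=
      mul_lt_mul_of_pos_left hp h1q0
    nlinarith [hPmul]
end

section
/- In the general demand oligopoly with N ≥ 2 sellers and T ≥ 1, assume a := Σ_{i≥N} q_i > 0, that q_j > 0 for some 1 ≤ j ≤ N−1, and that δ·V(N−i, T−1) < p̄ for every 1 ≤ i ≤ N−1. Then G is continuous and strictly increasing on [0,1]. -/
/-!
Put `u i = p̄ - δ V(N - i, T - 1) > 0`, so that
`G = p̄ - (∑ q i Z_{i-1} u i) / (a + ∑ q i Z_{i-1})`. `Z_k(x)` is the distribution function at `k`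
of a binomial `(N - 1, x)` law: it strictly decreases in `x` for `k < N - 1`, and it is totally
positive of order two in `(k, x)`, i.e. `Z_k / Z_l` decreases for `k ≤ l`, because the Bernstein
basis is (its odds ratio `x / (1 - x)` increases). By induction on the horizon `V` is antitone in
the number of sellers, so `u` decreases in `i`. A Chebyshev-type rearrangement inequality for an
antitone weight against a TP₂ family then shows that the subtracted ratio strictly decreases in `x`.
-/

open Finset Polynomial

theorem Finset.sum_mul_sum_le_of_antitoneOn {ι R : Type*} [LinearOrder ι] [CommRing R]
    [LinearOrder R] [IsStrictOrderedRing R] (s : Finset ι) {u z z' : ι → R} (hu : AntitoneOn u s)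
    (hz : ∀ i ∈ s, ∀ k ∈ s, i ≤ k → z' i * z k ≤ z i * z' k) :
    (∑ i ∈ s, z' i * u i) * ∑ i ∈ s, z i ≤ (∑ i ∈ s, z i * u i) * ∑ i ∈ s, z' i := by
  set D : ι → ι → R := fun i k => z i * z' k - z' i * z k
  have h_diff : (∑ i ∈ s, z i * u i) * ∑ i ∈ s, z' i - (∑ i ∈ s, z' i * u i) * ∑ i ∈ s, z i
      = ∑ i ∈ s, ∑ k ∈ s, u i * D i k := by
    rw [sum_mul_sum, sum_mul_sum, ← sum_sub_distrib]
    refine sum_congr rfl fun i _ => ?_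
    rw [← sum_sub_distrib]
    exact sum_congr rfl fun k _ => by ring
  -- swapping the summation indices flips the sign of `D`
  have h_swap : ∑ i ∈ s, ∑ k ∈ s, u i * D i k = ∑ i ∈ s, ∑ k ∈ s, -(u k * D i k) := by
    rw [sum_comm (f := fun i k => -(u k * D i k))]
    exact sum_congr rfl fun i _ => sum_congr rfl fun k _ => by ring
  have h_pair : ∀ i ∈ s, ∀ k ∈ s, 0 ≤ (u i - u k) * D i k := by
    intro i hi k hk
    rcases le_total i k with hik | hki
    · exact mul_nonneg (sub_nonneg.2 (hu hi hk hik)) (sub_nonneg.2 (hz i hi k hk hik))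
    · exact mul_nonneg_of_nonpos_of_nonpos (sub_nonpos.2 (hu hk hi hki))
        (by linarith [hz k hk i hi hki])
  have h_two : 2 * ∑ i ∈ s, ∑ k ∈ s, u i * D i k = ∑ i ∈ s, ∑ k ∈ s, (u i - u k) * D i k := by
    rw [two_mul]
    nth_rewrite 2 [h_swap]
    rw [← sum_add_distrib]
    refine sum_congr rfl fun i _ => ?_
    rw [← sum_add_distrib]
    exact sum_congr rfl fun k _ => by ring
  have h_nonneg : 0 ≤ ∑ i ∈ s, ∑ k ∈ s, (u i - u k) * D i k :=
    sum_nonneg fun i hi => sum_nonneg fun k hk => h_pair i hi k hk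
  linarith

theorem add_sum_div_add_sum_lt {ι 𝕜 : Type*} [LinearOrder ι] [Field 𝕜] [LinearOrder 𝕜]
    [IsStrictOrderedRing 𝕜] (s : Finset ι) {a p : 𝕜} {v z z' : ι → 𝕜} (ha : 0 < a)
    (hv : MonotoneOn v s) (hvp : ∀ i ∈ s, v i ≤ p)
    (hz' : ∀ i ∈ s, 0 ≤ z' i) (hz'z : ∀ i ∈ s, z' i ≤ z i)
    (hz : ∀ i ∈ s, ∀ k ∈ s, i ≤ k → z' i * z k ≤ z i * z' k)
    (hstrict : ∃ j ∈ s, v j < p ∧ z' j < z j) :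
    (a * p + ∑ i ∈ s, z i * v i) / (a + ∑ i ∈ s, z i) <
      (a * p + ∑ i ∈ s, z' i * v i) / (a + ∑ i ∈ s, z' i) := by
  have hz_nonneg : ∀ i ∈ s, 0 ≤ z i := fun i hi => (hz' i hi).trans (hz'z i hi)
  have h_gap : ∑ i ∈ s, z' i * (p - v i) < ∑ i ∈ s, z i * (p - v i) := by
    obtain ⟨j, hj, hvj, hzj⟩ := hstrict
    refine sum_lt_sum (fun i hi => mul_le_mul_of_nonneg_right (hz'z i hi)
      (sub_nonneg.2 (hvp i hi))) ⟨j, hj, mul_lt_mul_of_pos_right hzj (sub_pos.2 hvj)⟩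
  have h_cross := s.sum_mul_sum_le_of_antitoneOn (u := fun i => p - v i)
    (fun i hi k hk hik => sub_le_sub_left (hv hi hk hik) p) hz
  simp only [mul_sub, sum_sub_distrib, ← sum_mul] at h_gap h_cross
  rw [div_lt_div_iff₀ (add_pos_of_pos_of_nonneg ha (sum_nonneg hz_nonneg))
    (add_pos_of_pos_of_nonneg ha (sum_nonneg hz'))]
  nlinarith [mul_lt_mul_of_pos_left h_gap ha]

namespace bernsteinPolynomial

theorem eval_eq {R : Type*} [CommRing R] (n ν : ℕ) (x : R) :
    (bernsteinPolynomial R n ν).eval x = n.choose ν * x ^ ν * (1 - x) ^ (n - ν) := by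
  simp [bernsteinPolynomial]

variable {R : Type*} [CommRing R] [LinearOrder R] [IsStrictOrderedRing R]

theorem eval_nonneg (n ν : ℕ) {x : R} (hx : x ∈ Set.Icc (0 : R) 1) :
    0 ≤ (bernsteinPolynomial R n ν).eval x := by
  have := sub_nonneg.2 hx.2
  rw [eval_eq]
  have := hx.1
  positivity

theorem eval_pos {n ν : ℕ} (h : ν ≤ n) {x : R} (hx : x ∈ Set.Ioo (0 : R) 1) :
    0 < (bernsteinPolynomial R n ν).eval x := by
  have := sub_pos.2 hx.2
  have := Nat.choose_pos h
  rw [eval_eq]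
  have := hx.1
  positivity

theorem eval_mul_eval_le {n ν μ : ℕ} (hνμ : ν ≤ μ) {x y : R} (hx : 0 ≤ x) (hxy : x ≤ y)
    (hy : y ≤ 1) :
    (bernsteinPolynomial R n ν).eval y * (bernsteinPolynomial R n μ).eval x ≤
      (bernsteinPolynomial R n ν).eval x * (bernsteinPolynomial R n μ).eval y := by
  rcases lt_or_ge n μ with hnμ | hμn
  · simp [eq_zero_of_lt R hnμ]
  obtain ⟨d, rfl⟩ : ∃ d, μ = ν + d := ⟨μ - ν, by omega⟩
  obtain ⟨e, rfl⟩ : ∃ e, n = ν + d + e := ⟨n - (ν + d), by omega⟩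
  simp only [eval_eq, show ν + d + e - ν = d + e by omega, show ν + d + e - (ν + d) = e by omega]
  have hy0 : 0 ≤ y := hx.trans hxy
  -- the odds ratio `t / (1 - t)` is increasing in `t`
  have h_odds : ((1 - y) * x) ^ d ≤ ((1 - x) * y) ^ d :=
    pow_le_pow_left₀ (mul_nonneg (by linarith) hx) (by nlinarith) d
  have h_rest : 0 ≤ ((ν + d + e).choose ν * (ν + d + e).choose (ν + d) : R) * (x * y) ^ ν *
      ((1 - x) * (1 - y)) ^ e := by
    have := mul_nonneg (sub_nonneg.2 (hxy.trans hy)) (sub_nonneg.2 hy)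
    positivity
  calc _ = ((ν + d + e).choose ν * (ν + d + e).choose (ν + d) : R) * (x * y) ^ ν *
        ((1 - x) * (1 - y)) ^ e * ((1 - y) * x) ^ d := by simp only [mul_pow, pow_add]; ring
    _ ≤ ((ν + d + e).choose ν * (ν + d + e).choose (ν + d) : R) * (x * y) ^ ν *
        ((1 - x) * (1 - y)) ^ e * ((1 - x) * y) ^ d := mul_le_mul_of_nonneg_left h_odds h_rest
    _ = _ := by simp only [mul_pow, pow_add]; ring

end bernsteinPolynomial

noncomputable def bernsteinCDF (R : Type*) [CommRing R] (n k : ℕ) : R[X] :=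
  ∑ ν ∈ range (k + 1), bernsteinPolynomial R n ν

namespace bernsteinCDF

theorem eval_nonneg {R : Type*} [CommRing R] [LinearOrder R] [IsStrictOrderedRing R] (n k : ℕ)
    {x : R} (hx : x ∈ Set.Icc (0 : R) 1) : 0 ≤ (bernsteinCDF R n k).eval x := by
  rw [bernsteinCDF, eval_finsetSum]
  exact sum_nonneg fun ν _ => bernsteinPolynomial.eval_nonneg n ν hx

theorem derivative_succ {R : Type*} [CommRing R] (n k : ℕ) :
    derivative (bernsteinCDF R (n + 1) k) = -(n + 1 : R[X]) * bernsteinPolynomial R n k := by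
  induction k with
  | zero => simp [bernsteinCDF, bernsteinPolynomial.derivative_zero]
  | succ k ih =>
    rw [bernsteinCDF, sum_range_succ, derivative_add, ← bernsteinCDF, ih,
      bernsteinPolynomial.derivative_succ]
    push_cast
    ring

theorem strictAntiOn {n k : ℕ} (hkn : k < n) :
    StrictAntiOn (fun x => (bernsteinCDF ℝ n k).eval x) (Set.Icc 0 1) := by
  obtain ⟨m, rfl⟩ : ∃ m, n = m + 1 := ⟨n - 1, by omega⟩
  refine strictAntiOn_of_deriv_neg (convex_Icc 0 1) (Polynomial.continuousOn _) fun x hx => ?_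
  rw [interior_Icc] at hx
  rw [Polynomial.deriv, derivative_succ, eval_mul, eval_neg]
  have := bernsteinPolynomial.eval_pos (Nat.le_of_lt_succ hkn) hx
  simp only [eval_add, eval_natCast, eval_one]
  nlinarith

theorem eval_mul_eval_le {R : Type*} [CommRing R] [LinearOrder R] [IsStrictOrderedRing R]
    (n : ℕ) {a b : ℕ} (hab : a ≤ b) {x y : R} (hx : 0 ≤ x) (hxy : x ≤ y) (hy : y ≤ 1) :
    (bernsteinCDF R n a).eval y * (bernsteinCDF R n b).eval x ≤
      (bernsteinCDF R n a).eval x * (bernsteinCDF R n b).eval y := by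
  -- truncating at `a` is weighting by an antitone indicator
  have h_trunc : ∀ t : R, (bernsteinCDF R n a).eval t =
      ∑ ν ∈ range (b + 1), (bernsteinPolynomial R n ν).eval t * if ν ≤ a then 1 else 0 := by
    intro t
    simp only [mul_ite, mul_one, mul_zero, ← sum_filter, bernsteinCDF, eval_finsetSum]
    congr 1
    ext ν
    simp only [mem_range, mem_filter]
    omega
  rw [h_trunc x, h_trunc y]
  simp only [bernsteinCDF, eval_finsetSum]
  refine (range (b + 1)).sum_mul_sum_le_of_antitoneOn (fun i _ k _ hik => ?_)
    fun i _ k _ hik => bernsteinPolynomial.eval_mul_eval_le hik hx hxy hy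
  split_ifs <;> first | omega | norm_num

end bernsteinCDF

theorem Summable.tsum_nat_add_eq_add {G : Type*} [AddCommGroup G] [TopologicalSpace G]
    [IsTopologicalAddGroup G] [T2Space G] {f : ℕ → G} (hf : Summable f) (M : ℕ) :
    ∑' i, f (M + i) = f M + ∑' i, f (M + 1 + i) := by
  have hM : Summable fun i => f (M + i) := (summable_nat_add_iff M).2 hf |>.congr
    fun i => by rw [add_comm]
  rw [hM.tsum_eq_zero_add, add_zero]
  exact congrArg _ (tsum_congr fun i => congrArg f (by omega))

theorem HasSum.sum_range_add_tsum_nat_add {G : Type*} [AddCommGroup G] [TopologicalSpace G]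
    [IsTopologicalAddGroup G] [T2Space G] {f : ℕ → G} {s : G} (hf : HasSum f s) (M : ℕ) :
    ∑ i ∈ range M, f i + ∑' i, f (M + i) = s := by
  simpa only [add_comm _ M, hf.tsum_eq] using hf.summable.sum_add_tsum_nat_add M

structure IsOptionValue (q : ℕ → ℝ) (δ pbar : ℝ) (V : ℕ → ℕ → ℝ) : Prop where
  zero : ∀ M, 1 ≤ M → V M 0 = 0
  succ : ∀ M t, 1 ≤ M →
    V M (t + 1) = ∑ i ∈ range M, q i * δ * V (M - i) t + (∑' i, q (M + i)) * pbar

namespace IsOptionValue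

variable {q : ℕ → ℝ} {δ pbar : ℝ} {V : ℕ → ℕ → ℝ}

theorem nonneg (hV : IsOptionValue q δ pbar V) (hq : ∀ i, 0 ≤ q i) (hδ : 0 ≤ δ)
    (hpbar : 0 ≤ pbar) (t : ℕ) {M : ℕ} (hM : 1 ≤ M) : 0 ≤ V M t := by
  induction t generalizing M with
  | zero => rw [hV.zero M hM]
  | succ t ih =>
    rw [hV.succ M t hM]
    refine add_nonneg (sum_nonneg fun i hi => ?_) (mul_nonneg (tsum_nonneg fun i => hq _) hpbar)
    have := ih (M := M - i) (by rw [mem_range] at hi; omega)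
    have := hq i
    positivity

theorem le_pbar (hV : IsOptionValue q δ pbar V) (hq : ∀ i, 0 ≤ q i) (hq1 : HasSum q 1)
    (hδ0 : 0 ≤ δ) (hδ1 : δ ≤ 1) (hpbar : 0 ≤ pbar) (t : ℕ) {M : ℕ} (hM : 1 ≤ M) :
    V M t ≤ pbar := by
  induction t generalizing M with
  | zero => rwa [hV.zero M hM]
  | succ t ih =>
    have h_step : ∀ i ∈ range M, q i * δ * V (M - i) t ≤ q i * pbar := fun i hi => by
      have hMi : 1 ≤ M - i := by rw [mem_range] at hi; omega
      have := hV.nonneg hq hδ0 hpbar t hMi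
      rw [mul_assoc]
      exact mul_le_mul_of_nonneg_left (by nlinarith [ih hMi]) (hq i)
    calc V M (t + 1) ≤ ∑ i ∈ range M, q i * pbar + (∑' i, q (M + i)) * pbar := by
          rw [hV.succ M t hM]; exact add_le_add_left (sum_le_sum h_step) _
      _ = pbar := by rw [← sum_mul, ← add_mul, hq1.sum_range_add_tsum_nat_add, one_mul]

theorem succ_le (hV : IsOptionValue q δ pbar V) (hq : ∀ i, 0 ≤ q i) (hq1 : HasSum q 1)
    (hδ0 : 0 ≤ δ) (hδ1 : δ ≤ 1) (hpbar : 0 ≤ pbar) (t : ℕ) {M : ℕ} (hM : 1 ≤ M) :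
    V (M + 1) t ≤ V M t := by
  induction t generalizing M with
  | zero => rw [hV.zero M hM, hV.zero (M + 1) (by omega)]
  | succ t ih =>
    rw [hV.succ (M + 1) t (by omega), hV.succ M t hM, sum_range_succ,
      hq1.summable.tsum_nat_add_eq_add M, Nat.add_sub_cancel_left]
    have h_sum : ∑ i ∈ range M, q i * δ * V (M + 1 - i) t ≤ ∑ i ∈ range M, q i * δ * V (M - i) t :=
      sum_le_sum fun i hi => by
        have hMi : 1 ≤ M - i := by rw [mem_range] at hi; omega
        rw [show M + 1 - i = M - i + 1 by omega]
        exact mul_le_mul_of_nonneg_left (ih hMi) (mul_nonneg (hq i) hδ0)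
    have h_last : q M * δ * V 1 t ≤ q M * pbar := by
      have := hV.nonneg hq hδ0 hpbar t le_rfl
      rw [mul_assoc]
      exact mul_le_mul_of_nonneg_left
        (by nlinarith [hV.le_pbar hq hq1 hδ0 hδ1 hpbar t le_rfl]) (hq M)
    linarith

theorem antitone (hV : IsOptionValue q δ pbar V) (hq : ∀ i, 0 ≤ q i) (hq1 : HasSum q 1)
    (hδ0 : 0 ≤ δ) (hδ1 : δ ≤ 1) (hpbar : 0 ≤ pbar) (t : ℕ) {M M' : ℕ} (hM : 1 ≤ M)
    (hMM' : M ≤ M') : V M' t ≤ V M t := by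
  induction M', hMM' using Nat.le_induction with
  | base => rfl
  | succ M' hMM' ih => exact (hV.succ_le hq hq1 hδ0 hδ1 hpbar t (hM.trans hMM')).trans ih

end IsOptionValue

theorem stmt14_general (q : ℕ → ℝ) (δ pbar : ℝ)
    (hqnn : ∀ i, 0 ≤ q i) (hqsummable : Summable q) (hqsum : ∑' i, q i = 1)
    (hδ0 : 0 < δ) (hδ1 : δ ≤ 1) (hpbar : 0 < pbar)
    (V : ℕ → ℕ → ℝ)
    (hV0 : ∀ M : ℕ, 1 ≤ M → V M 0 = 0)
    (hVrec : ∀ M T : ℕ, 1 ≤ M → 1 ≤ T →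
      V M T = ∑ i ∈ Finset.range M, q i * δ * V (M - i) (T - 1) + (∑' i, q (M + i)) * pbar)
    (N T : ℕ)
    (htail : 0 < ∑' i, q (N + i))
    (hqj : ∃ j : ℕ, 1 ≤ j ∧ j ≤ N - 1 ∧ 0 < q j)
    (hVlt : ∀ i : ℕ, 1 ≤ i → i ≤ N - 1 → δ * V (N - i) (T - 1) < pbar)
    (Z : ℕ → ℝ → ℝ)
    (hZ : ∀ (j : ℕ) (x : ℝ), Z j x =
      ∑ i ∈ Finset.range (j + 1), ((N - 1).choose i : ℝ) * (1 - x) ^ (N - 1 - i) * x ^ i)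
    (G : ℝ → ℝ)
    (hG : ∀ x : ℝ, G x =
      ((∑' i, q (N + i)) * pbar +
        ∑ i ∈ Finset.Icc 1 (N - 1), q i * Z (i - 1) x * (δ * V (N - i) (T - 1))) /
      ((∑' i, q (N + i)) + ∑ i ∈ Finset.Icc 1 (N - 1), q i * Z (i - 1) x)) :
    ContinuousOn G (Set.Icc 0 1) ∧ StrictMonoOn G (Set.Icc 0 1) := by
  have hV : IsOptionValue q δ pbar V :=
    ⟨hV0, fun M t hM => by simpa using hVrec M (t + 1) hM (by omega)⟩
  have hq1 : HasSum q 1 := hqsum ▸ hqsummable.hasSum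
  obtain rfl : Z = fun j x => (bernsteinCDF ℝ (N - 1) j).eval x := by
    ext j x
    rw [hZ, bernsteinCDF, eval_finsetSum]
    exact sum_congr rfl fun ν _ => by rw [bernsteinPolynomial.eval_eq]; ring
  have hZ_anti : ∀ i ∈ Icc 1 (N - 1), StrictAntiOn (bernsteinCDF ℝ (N - 1) (i - 1)).eval
      (Set.Icc 0 1) := fun i hi => bernsteinCDF.strictAntiOn (by rw [mem_Icc] at hi; omega)
  refine ⟨?_, fun x hx y hy hxy => ?_⟩
  · rw [funext hG]
    refine ContinuousOn.div (by fun_prop) (by fun_prop) fun x hx => (add_pos_of_pos_of_nonneg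
      htail (sum_nonneg fun i _ => mul_nonneg (hqnn i) (bernsteinCDF.eval_nonneg _ _ hx))).ne'
  rw [hG, hG]
  obtain ⟨j, hj1, hjN, hqj⟩ := hqj
  refine add_sum_div_add_sum_lt _ htail (fun i hi k hk hik => ?_)
    (fun i hi => (hVlt i (mem_Icc.1 hi).1 (mem_Icc.1 hi).2).le)
    (fun i _ => mul_nonneg (hqnn i) (bernsteinCDF.eval_nonneg _ _ hy))
    (fun i hi => mul_le_mul_of_nonneg_left ((hZ_anti i hi).antitoneOn hx hy hxy.le) (hqnn i))
    (fun i _ k _ hik => ?_)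
    ⟨j, mem_Icc.2 ⟨hj1, hjN⟩, hVlt j hj1 hjN,
      mul_lt_mul_of_pos_left (hZ_anti j (mem_Icc.2 ⟨hj1, hjN⟩) hx hy hxy) hqj⟩
  · simp only [coe_Icc, Set.mem_Icc] at hi hk
    exact mul_le_mul_of_nonneg_left
      (hV.antitone hqnn hq1 hδ0.le hδ1 hpbar.le _ (by omega) (by omega)) hδ0.le
  · have := bernsteinCDF.eval_mul_eval_le (N - 1) (Nat.sub_le_sub_right hik 1) hx.1 hxy.le hy.2
    nlinarith [mul_nonneg (hqnn i) (hqnn k)]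

/-- General demand oligopoly: under the stated assumptions, the map `G` is continuous and
strictly increasing on `[0,1]`. -/
theorem stmt14 (q : ℕ → ℝ) (δ pbar : ℝ)
    (hqnn : ∀ i, 0 ≤ q i) (hqsummable : Summable q) (hqsum : ∑' i, q i = 1)
    (hq0 : q 0 < 1) (hδ0 : 0 < δ) (hδ1 : δ ≤ 1) (hpbar : 0 < pbar)
    (V : ℕ → ℕ → ℝ)
    (hV0 : ∀ M : ℕ, 1 ≤ M → V M 0 = 0)
    (hVrec : ∀ M T : ℕ, 1 ≤ M → 1 ≤ T →
      V M T = ∑ i ∈ Finset.range M, q i * δ * V (M - i) (T - 1) + (∑' i, q (M + i)) * pbar)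
    (N T : ℕ) (hN : 2 ≤ N) (hT : 1 ≤ T)
    (htail : 0 < ∑' i, q (N + i))
    (hqj : ∃ j : ℕ, 1 ≤ j ∧ j ≤ N - 1 ∧ 0 < q j)
    (hVlt : ∀ i : ℕ, 1 ≤ i → i ≤ N - 1 → δ * V (N - i) (T - 1) < pbar)
    (Z : ℕ → ℝ → ℝ)
    (hZ : ∀ (j : ℕ) (x : ℝ), Z j x =
      ∑ i ∈ Finset.range (j + 1), ((N - 1).choose i : ℝ) * (1 - x) ^ (N - 1 - i) * x ^ i)
    (G : ℝ → ℝ)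
    (hG : ∀ x : ℝ, G x =
      ((∑' i, q (N + i)) * pbar +
        ∑ i ∈ Finset.Icc 1 (N - 1), q i * Z (i - 1) x * (δ * V (N - i) (T - 1))) /
      ((∑' i, q (N + i)) + ∑ i ∈ Finset.Icc 1 (N - 1), q i * Z (i - 1) x)) :
    ContinuousOn G (Set.Icc 0 1) ∧ StrictMonoOn G (Set.Icc 0 1) :=
  stmt14_general q δ pbar hqnn hqsummable hqsum hδ0 hδ1 hpbar V hV0 hVrec N T htail hqj hVlt Z hZ G
    hG
end

section
/- In the general demand oligopoly with N ≥ 2 sellers and T ≥ 1, assume q₀ < 1, a := Σ_{i≥N} q_i > 0, that q_j > 0 for some 1 ≤ j ≤ N−1, and that δ·V(N−i, T−1) < p̄ for every 1 ≤ i ≤ N−1. Then for every price p ∈ [P*(N,T), p̄] there exists a unique x ∈ [0,1] with G(x) = p; hence G⁻¹ is a well-defined continuous strictly increasing map from [P*(N,T), p̄] onto [0,1], so the symmetric mixed strategy W_{N,T} given by W_{N,T}(p) = 0 for p ≤ P*(N,T), W_{N,T}(p) = G⁻¹(p) for P*(N,T) < p < p̄, and W_{N,T}(p) = 1 for p ≥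 p̄ is a valid cumulative distribution function. -/
open Finset

lemma pair_sum (m : ℕ) (f : ℕ → ℕ → ℝ) :
    ∑ k ∈ range m, ∑ l ∈ range m, f k l
      = (∑ k ∈ range m, ∑ l ∈ range k, (f k l + f l k)) + ∑ k ∈ range m, f k k := by
  induction m with
  | zero => simp
  | succ n ih =>
    rw [sum_range_succ, sum_range_succ (f := fun k => ∑ l ∈ range k, (f k l + f l k)),
      sum_range_succ (f := fun k => f k k)]
    have h1 : ∀ k ∈ range n, ∑ l ∈ range (n+1), f k l = (∑ l ∈ range n, f k l) + f k n :=
      fun k _ => sum_range_succ _ _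
    rw [sum_congr rfl h1, sum_add_distrib, ih, sum_range_succ, sum_add_distrib]
    ring

lemma sum_swap_aux (n : ℕ) (f b : ℕ → ℝ) :
    ∑ i ∈ Icc 1 n, f i * (∑ k ∈ range i, b k)
      = ∑ k ∈ range n, (∑ i ∈ Icc (k+1) n, f i) * b k := by
  induction n with
  | zero => simp
  | succ n ih =>
    rw [sum_range_succ, ← Finset.insert_Icc_right_eq_Icc_add_one (by omega : 1 ≤ n + 1), sum_insert (by simp),
      ih]
    have h1 : ∀ k ∈ range n, (∑ i ∈ Icc (k+1) (n+1), f i) * b k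
        = (∑ i ∈ Icc (k+1) n, f i) * b k + f (n+1) * b k := by
      intro k hk
      rw [← Finset.insert_Icc_right_eq_Icc_add_one (by simp at hk; omega : k + 1 ≤ n + 1), sum_insert (by simp)]
      ring
    rw [sum_congr rfl h1, sum_add_distrib]
    rw [Finset.mul_sum, Finset.sum_range_succ (f := fun x => f (n+1) * b x), Finset.Icc_self,
      Finset.sum_singleton]
    ring

lemma key_ineq (m : ℕ) (b c r d : ℕ → ℝ)
    (hbc : ∀ l k, l < k → k < m → b k * c l ≤ c k * b l)
    (hrd : ∀ l k, l < k → k < m → r k * d l ≤ r l * d k)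
    (k₀ l₀ : ℕ) (hlk : l₀ < k₀) (hk : k₀ < m)
    (h1 : r k₀ * d l₀ < r l₀ * d k₀) (h2 : b k₀ * c l₀ < c k₀ * b l₀) :
    (∑ k ∈ range m, r k * c k) * (∑ l ∈ range m, d l * b l)
      < (∑ k ∈ range m, r k * b k) * (∑ l ∈ range m, d l * c l) := by
  rw [← sub_pos]
  have expand : (∑ k ∈ range m, r k * b k) * (∑ l ∈ range m, d l * c l)
      - (∑ k ∈ range m, r k * c k) * (∑ l ∈ range m, d l * b l)
      = ∑ k ∈ range m, ∑ l ∈ range m, (r k * d l * (b k * c l - c k * b l)) := by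
    rw [Finset.sum_mul_sum, Finset.sum_mul_sum, ← Finset.sum_sub_distrib]
    refine Finset.sum_congr rfl fun k _ => ?_
    rw [← Finset.sum_sub_distrib]
    exact Finset.sum_congr rfl fun l _ => by ring
  rw [expand, pair_sum]
  have hdiag : ∑ k ∈ range m, (r k * d k * (b k * c k - c k * b k)) = 0 := by
    apply Finset.sum_eq_zero; intro k _; ring
  rw [hdiag, add_zero]
  have hterm : ∀ k ∈ range m, ∀ l ∈ range k,
      r k * d l * (b k * c l - c k * b l) + r l * d k * (b l * c k - c l * b k)
        = (r l * d k - r k * d l) * (c k * b l - b k * c l) := fun k _ l _ => by ring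
  have hnn : ∀ k ∈ range m, 0 ≤ ∑ l ∈ range k,
      (r k * d l * (b k * c l - c k * b l) + r l * d k * (b l * c k - c l * b k)) := by
    intro k hk'
    apply Finset.sum_nonneg
    intro l hl
    rw [hterm k hk' l hl]
    have h3 := hbc l k (mem_range.1 hl) (mem_range.1 hk')
    have h4 := hrd l k (mem_range.1 hl) (mem_range.1 hk')
    nlinarith
  apply Finset.sum_pos'
  · exact hnn
  refine ⟨k₀, mem_range.2 hk, ?_⟩
  apply Finset.sum_pos'
  · intro l hl
    rw [hterm k₀ (mem_range.2 hk) l hl]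
    have h3 := hbc l k₀ (mem_range.1 hl) hk
    have h4 := hrd l k₀ (mem_range.1 hl) hk
    nlinarith
  refine ⟨l₀, mem_range.2 hlk, ?_⟩
  rw [hterm k₀ (mem_range.2 hk) l₀ (mem_range.2 hlk)]
  nlinarith

lemma pow_split (x : ℝ) (a b : ℕ) (h : a ≤ b) : x ^ b = x ^ a * x ^ (b - a) := by
  rw [← pow_add]; congr 1; omega

lemma tp2 (n l k : ℕ) (hlk : l < k) (hkn : k ≤ n) (x y : ℝ)
    (hx : 0 ≤ x) (hy : y ≤ 1) (hxy : x ≤ y) :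
    ((n.choose k : ℝ) * (1-x)^(n-k) * x^k) * ((n.choose l : ℝ) * (1-y)^(n-l) * y^l)
      ≤ ((n.choose k : ℝ) * (1-y)^(n-k) * y^k) * ((n.choose l : ℝ) * (1-x)^(n-l) * x^l) := by
  have hy0 : 0 ≤ y := hx.trans hxy
  have hx1 : x ≤ 1 := hxy.trans hy
  have h1y : 0 ≤ 1 - y := by linarith
  have h1x : 0 ≤ 1 - x := by linarith
  have key : (x*(1-y))^(k-l) ≤ (y*(1-x))^(k-l) := by
    apply pow_le_pow_left₀ (by positivity) (by nlinarith)
  have e1 : x^k = x^l * x^(k-l) := pow_split x l k hlk.le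
  have e2 : (1-y)^(n-l) = (1-y)^(n-k) * (1-y)^((n-l)-(n-k)) := pow_split _ (n-k) (n-l) (by omega)
  have e3 : y^k = y^l * y^(k-l) := pow_split y l k hlk.le
  have e4 : (1-x)^(n-l) = (1-x)^(n-k) * (1-x)^((n-l)-(n-k)) := pow_split _ (n-k) (n-l) (by omega)
  have hmm : (n-l)-(n-k) = k - l := by omega
  rw [e1, e2, e3, e4, hmm]
  have hM : 0 ≤ (n.choose k : ℝ) * (n.choose l : ℝ) * ((1-x)^(n-k) * (1-y)^(n-k) * (x^l * y^l)) := by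
    positivity
  calc ((n.choose k : ℝ) * (1-x)^(n-k) * (x^l * x^(k-l))) * ((n.choose l : ℝ) * ((1-y)^(n-k) * (1-y)^(k-l)) * y^l)
      = ((n.choose k : ℝ) * (n.choose l : ℝ) * ((1-x)^(n-k) * (1-y)^(n-k) * (x^l * y^l))) * (x*(1-y))^(k-l) := by
        rw [mul_pow]; ring
    _ ≤ ((n.choose k : ℝ) * (n.choose l : ℝ) * ((1-x)^(n-k) * (1-y)^(n-k) * (x^l * y^l))) * (y*(1-x))^(k-l) :=
        mul_le_mul_of_nonneg_left key hM
    _ = ((n.choose k : ℝ) * (1-y)^(n-k) * (y^l * y^(k-l))) * ((n.choose l : ℝ) * ((1-x)^(n-k) * (1-x)^(k-l)) * x^l) := by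
        rw [mul_pow]; ring

set_option maxHeartbeats 1000000 in
/-- General demand oligopoly: every price `p ∈ [P*(N,T), p̄]` has a unique preimage
`x ∈ [0,1]` under `G`; hence `G⁻¹` is a well-defined continuous strictly increasing map
from `[P*(N,T), p̄]` onto `[0,1]`, and the symmetric mixed strategy `W_{N,T}` built from
it is a valid cumulative distribution function. -/
theorem stmt16 (q : ℕ → ℝ) (δ pbar : ℝ)
    (hqnn : ∀ i, 0 ≤ q i) (hqsummable : Summable q) (hqsum : ∑' i, q i = 1)
    (hq0 : q 0 < 1) (hδ0 : 0 < δ) (hδ1 : δ ≤ 1) (hpbar : 0 < pbar)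
    (V : ℕ → ℕ → ℝ)
    (hV0 : ∀ M : ℕ, 1 ≤ M → V M 0 = 0)
    (hVrec : ∀ M T : ℕ, 1 ≤ M → 1 ≤ T →
      V M T = ∑ i ∈ Finset.range M, q i * δ * V (M - i) (T - 1) + (∑' i, q (M + i)) * pbar)
    (N T : ℕ) (hN : 2 ≤ N) (hT : 1 ≤ T)
    (htail : 0 < ∑' i, q (N + i))
    (hqj : ∃ j : ℕ, 1 ≤ j ∧ j ≤ N - 1 ∧ 0 < q j)
    (hVlt : ∀ i : ℕ, 1 ≤ i → i ≤ N - 1 → δ * V (N - i) (T - 1) < pbar)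
    (Z : ℕ → ℝ → ℝ)
    (hZ : ∀ (j : ℕ) (x : ℝ), Z j x =
      ∑ i ∈ Finset.range (j + 1), ((N - 1).choose i : ℝ) * (1 - x) ^ (N - 1 - i) * x ^ i)
    (G : ℝ → ℝ)
    (hG : ∀ x : ℝ, G x =
      ((∑' i, q (N + i)) * pbar +
        ∑ i ∈ Finset.Icc 1 (N - 1), q i * Z (i - 1) x * (δ * V (N - i) (T - 1))) /
      ((∑' i, q (N + i)) + ∑ i ∈ Finset.Icc 1 (N - 1), q i * Z (i - 1) x))
    (Pstar : ℝ) (hPstar : Pstar = (V N T - q 0 * δ * V N (T - 1)) / (1 - q 0)) :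
    (∀ p ∈ Set.Icc Pstar pbar, ∃! x : ℝ, x ∈ Set.Icc (0 : ℝ) 1 ∧ G x = p) ∧
    ∃ Ginv : ℝ → ℝ,
      (∀ p ∈ Set.Icc Pstar pbar, Ginv p ∈ Set.Icc (0 : ℝ) 1 ∧ G (Ginv p) = p) ∧
      ContinuousOn Ginv (Set.Icc Pstar pbar) ∧
      StrictMonoOn Ginv (Set.Icc Pstar pbar) ∧
      Set.BijOn Ginv (Set.Icc Pstar pbar) (Set.Icc 0 1) ∧
      ∀ W : ℝ → ℝ,
        (∀ p : ℝ, p ≤ Pstar → W p = 0) →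
        (∀ p : ℝ, Pstar < p → p < pbar → W p = Ginv p) →
        (∀ p : ℝ, pbar ≤ p → W p = 1) →
        Monotone W ∧ ∀ p : ℝ, 0 ≤ W p ∧ W p ≤ 1 := by
  classical
  -- notation
  set n := N - 1 with hn_def
  have hn1 : 1 ≤ n := by omega
  have hnN : n + 1 = N := by omega
  set a := ∑' i, q (N + i) with ha_def
  set u : ℕ → ℝ := fun i => pbar - δ * V (N - i) (T - 1) with hu_def
  set bb : ℝ → ℕ → ℝ := fun x k => ((n.choose k : ℝ)) * (1 - x)^(n - k) * x^k with hbb_def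
  set r : ℕ → ℝ := fun k => ∑ i ∈ Finset.Icc (k+1) n, q i * u i with hr_def
  set dd : ℕ → ℝ := fun k => a + ∑ i ∈ Finset.Icc (k+1) n, q i with hdd_def
  -- basic tail facts
  have hsum1 : ∀ M : ℕ, (∑ i ∈ Finset.range M, q i) + (∑' i, q (M + i)) = 1 := by
    intro M
    have hs : ∑' i, q (M + i) = ∑' i, q (i + M) := tsum_congr fun i => by rw [add_comm]
    rw [hs, Summable.sum_add_tsum_nat_add M hqsummable, hqsum]
  have htail_nonneg : ∀ M : ℕ, 0 ≤ ∑' i, q (M + i) := fun M => tsum_nonneg (fun i => hqnn _)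
  have htail_split : ∀ M : ℕ, (∑' i, q (M + i)) = q M + ∑' i, q (M + 1 + i) := by
    intro M
    have hs : Summable (fun i => q (i + M)) := (summable_nat_add_iff M).2 hqsummable
    have hs' : Summable (fun i => q (M + i)) := by
      apply hs.congr; intro i; rw [add_comm]
    rw [Summable.tsum_eq_zero_add hs']
    simp only [add_zero]
    congr 1
    apply tsum_congr; intro i; congr 1; omega
  -- V facts
  have hVnonneg : ∀ τ M, 1 ≤ M → 0 ≤ V M τ := by
    intro τ
    induction τ with
    | zero => intro M hM; rw [hV0 M hM]
    | succ t ih =>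
      intro M hM
      rw [hVrec M (t+1) hM (by omega)]
      simp only [Nat.add_sub_cancel]
      apply add_nonneg
      · apply Finset.sum_nonneg
        intro i hi
        simp only [Finset.mem_range] at hi
        exact mul_nonneg (mul_nonneg (hqnn i) hδ0.le) (ih (M - i) (by omega))
      · exact mul_nonneg (htail_nonneg M) hpbar.le
  have hVle : ∀ τ M, 1 ≤ M → V M τ ≤ pbar := by
    intro τ
    induction τ with
    | zero => intro M hM; rw [hV0 M hM]; exact hpbar.le
    | succ t ih =>
      intro M hM
      rw [hVrec M (t+1) hM (by omega)]
      simp only [Nat.add_sub_cancel]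
      have hterm : ∀ i ∈ Finset.range M, q i * δ * V (M-i) t ≤ q i * pbar := by
        intro i hi; simp only [Finset.mem_range] at hi
        have h2 := ih (M-i) (by omega)
        have h3 := hVnonneg t (M-i) (by omega)
        have h1 : δ * V (M-i) t ≤ pbar := by nlinarith
        calc q i * δ * V (M-i) t = q i * (δ * V (M-i) t) := by ring
          _ ≤ q i * pbar := mul_le_mul_of_nonneg_left h1 (hqnn i)
      calc ∑ i ∈ Finset.range M, q i * δ * V (M-i) t + (∑' i, q (M + i)) * pbar
          ≤ ∑ i ∈ Finset.range M, q i * pbar + (∑' i, q (M + i)) * pbar :=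
            add_le_add (Finset.sum_le_sum hterm) le_rfl
        _ = ((∑ i ∈ Finset.range M, q i) + ∑' i, q (M + i)) * pbar := by
            rw [add_mul, Finset.sum_mul]
        _ = pbar := by rw [hsum1 M, one_mul]
  have hVsucc : ∀ τ M, 1 ≤ M → V (M+1) τ ≤ V M τ := by
    intro τ
    induction τ with
    | zero => intro M hM; rw [hV0 M hM, hV0 (M+1) (by omega)]
    | succ t ih =>
      intro M hM
      rw [hVrec M (t+1) hM (by omega), hVrec (M+1) (t+1) (by omega) (by omega)]
      simp only [Nat.add_sub_cancel]
      rw [Finset.sum_range_succ]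
      have hM1 : M + 1 - M = 1 := by omega
      rw [hM1, htail_split M]
      have hsum_le : ∑ i ∈ Finset.range M, q i * δ * V (M+1-i) t
          ≤ ∑ i ∈ Finset.range M, q i * δ * V (M-i) t := by
        apply Finset.sum_le_sum
        intro i hi; simp only [Finset.mem_range] at hi
        have h1 : M + 1 - i = (M - i) + 1 := by omega
        rw [h1]
        exact mul_le_mul_of_nonneg_left (ih (M-i) (by omega)) (mul_nonneg (hqnn i) hδ0.le)
      have hlast : q M * δ * V 1 t ≤ q M * pbar := by
        have h2 := hVle t 1 le_rfl
        have h3 := hVnonneg t 1 le_rfl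
        have h4 : δ * V 1 t ≤ pbar := by nlinarith
        calc q M * δ * V 1 t = q M * (δ * V 1 t) := by ring
          _ ≤ q M * pbar := mul_le_mul_of_nonneg_left h4 (hqnn M)
      rw [add_mul]
      linarith
  have hVanti : ∀ τ M₁ M₂, 1 ≤ M₁ → M₁ ≤ M₂ → V M₂ τ ≤ V M₁ τ := by
    intro τ M₁ M₂ h1 h2
    induction M₂, h2 using Nat.le_induction with
    | base => exact le_rfl
    | succ M₂ hle ih => exact (hVsucc τ M₂ (by omega)).trans ih
  -- u facts
  have hu_pos : ∀ i, 1 ≤ i → i ≤ n → 0 < u i := by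
    intro i h1 h2
    have := hVlt i h1 h2
    simp only [hu_def]
    linarith
  have hu_anti : ∀ i j, 1 ≤ i → i ≤ j → j ≤ n → u j ≤ u i := by
    intro i j h1 hij hjn
    simp only [hu_def]
    have h2 : V (N - i) (T-1) ≤ V (N - j) (T-1) := hVanti (T-1) (N-j) (N-i) (by omega) (by omega)
    nlinarith
  -- r, dd facts
  have hdd_pos : ∀ k, 0 < dd k := by
    intro k
    exact add_pos_of_pos_of_nonneg htail (Finset.sum_nonneg fun i _ => hqnn i)
  have hr_nonneg : ∀ k, 0 ≤ r k := by
    intro k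
    apply Finset.sum_nonneg
    intro i hi
    simp only [Finset.mem_Icc] at hi
    exact mul_nonneg (hqnn i) (hu_pos i (by omega) hi.2).le
  have hrd_succ : ∀ k, r (k+1) * dd k ≤ r k * dd (k+1) := by
    intro k
    by_cases hkn : k + 1 ≤ n
    · have hins : Finset.Icc (k+1) n = insert (k+1) (Finset.Icc (k+2) n) := by
        ext x; simp only [Finset.mem_Icc, Finset.mem_insert]; omega
      have hnotmem : (k+1) ∉ Finset.Icc (k+2) n := by simp [Finset.mem_Icc]
      have hr_split : r k = q (k+1) * u (k+1) + r (k+1) := by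
        simp only [hr_def]; rw [hins, Finset.sum_insert hnotmem]
      have hd_split : dd k = q (k+1) + dd (k+1) := by
        simp only [hdd_def]; rw [hins, Finset.sum_insert hnotmem]; ring
      have hupos := hu_pos (k+1) (by omega) hkn
      have hbound : r (k+1) ≤ u (k+1) * dd (k+1) := by
        have h1 : r (k+1) ≤ ∑ i ∈ Finset.Icc (k+2) n, q i * u (k+1) := by
          apply Finset.sum_le_sum
          intro i hi; simp only [Finset.mem_Icc] at hi
          exact mul_le_mul_of_nonneg_left (hu_anti (k+1) i (by omega) (by omega) hi.2) (hqnn i)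
        have h2 : ∑ i ∈ Finset.Icc (k+2) n, q i * u (k+1)
            = (∑ i ∈ Finset.Icc (k+2) n, q i) * u (k+1) := by rw [Finset.sum_mul]
        have h3 : (∑ i ∈ Finset.Icc (k+2) n, q i) * u (k+1) ≤ dd (k+1) * u (k+1) := by
          apply mul_le_mul_of_nonneg_right _ hupos.le
          simp only [hdd_def]
          linarith
        nlinarith
      have hq1 := hqnn (k+1)
      have hddp := hdd_pos (k+1)
      have hr1 := hr_nonneg (k+1)
      rw [hr_split, hd_split]
      nlinarith [mul_le_mul_of_nonneg_left hbound hq1]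
    · have h1 : r (k+1) = 0 := by
        simp only [hr_def]
        rw [Finset.Icc_eq_empty (by omega), Finset.sum_empty]
      rw [h1, zero_mul]
      exact mul_nonneg (hr_nonneg k) (hdd_pos (k+1)).le
  have hrd_le : ∀ l k : ℕ, l < k → r k * dd l ≤ r l * dd k := by
    have hmono : Antitone (fun k => r k / dd k) := antitone_nat_of_succ_le (fun k => by
      rw [div_le_div_iff₀ (hdd_pos _) (hdd_pos _)]; exact hrd_succ k)
    intro l k hlk
    have h1 := hmono hlk.le
    rwa [div_le_div_iff₀ (hdd_pos k) (hdd_pos l)] at h1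
  -- binomial weights
  have hbb_nonneg : ∀ x k, 0 ≤ x → x ≤ 1 → 0 ≤ bb x k := by
    intro x k hx hx1
    have h1x : (0:ℝ) ≤ 1 - x := by linarith
    simp only [hbb_def]
    positivity
  have hbb_sum : ∀ x : ℝ, ∑ k ∈ range (n+1), bb x k = 1 := by
    intro x
    have h2 : x + (1 - x) = 1 := by ring
    calc ∑ k ∈ range (n+1), bb x k
        = ∑ k ∈ range (n+1), x^k * (1-x)^(n-k) * ((n.choose k : ℝ)) := by
          apply sum_congr rfl; intro k _; simp only [hbb_def]; ring
      _ = (x + (1-x))^n := (add_pow x (1-x) n).symm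
      _ = 1 := by rw [h2, one_pow]
  have hZbb : ∀ (i : ℕ) (x : ℝ), 1 ≤ i → Z (i-1) x = ∑ k ∈ range i, bb x k := by
    intro i x hi
    rw [hZ]
    have h : i - 1 + 1 = i := by omega
    rw [h]
  have hZ_nonneg : ∀ (i : ℕ) (x : ℝ), 1 ≤ i → 0 ≤ x → x ≤ 1 → 0 ≤ Z (i-1) x := by
    intro i x h1 hx hx1
    rw [hZbb i x h1]
    exact Finset.sum_nonneg fun k _ => hbb_nonneg x k hx hx1
  -- R and D
  set R : ℝ → ℝ := fun x => ∑ k ∈ range (n+1), bb x k * r k with hR_def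
  set DD : ℝ → ℝ := fun x => ∑ k ∈ range (n+1), bb x k * dd k with hDD_def
  have hD_eq : ∀ x : ℝ, DD x = a + ∑ i ∈ Finset.Icc 1 n, q i * Z (i-1) x := by
    intro x
    simp only [hDD_def, hdd_def]
    have h1 : ∑ k ∈ range (n+1), bb x k * (a + ∑ i ∈ Finset.Icc (k+1) n, q i)
        = a * (∑ k ∈ range (n+1), bb x k)
          + ∑ k ∈ range (n+1), (∑ i ∈ Finset.Icc (k+1) n, q i) * bb x k := by
      rw [Finset.mul_sum, ← Finset.sum_add_distrib]
      exact sum_congr rfl fun k _ => by ring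
    rw [h1, hbb_sum x, mul_one]
    congr 1
    rw [Finset.sum_range_succ, Finset.Icc_eq_empty (by omega : ¬ n + 1 ≤ n), Finset.sum_empty,
      zero_mul, add_zero, ← sum_swap_aux n q (bb x)]
    apply sum_congr rfl
    intro i hi
    simp only [Finset.mem_Icc] at hi
    rw [hZbb i x hi.1]
  have hR_eq : ∀ x : ℝ, R x = ∑ i ∈ Finset.Icc 1 n, q i * Z (i-1) x * u i := by
    intro x
    simp only [hR_def, hr_def]
    rw [Finset.sum_range_succ, Finset.Icc_eq_empty (by omega : ¬ n + 1 ≤ n), Finset.sum_empty,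
      mul_zero, add_zero]
    have h1 : ∑ k ∈ range n, bb x k * (∑ i ∈ Finset.Icc (k+1) n, q i * u i)
        = ∑ k ∈ range n, (∑ i ∈ Finset.Icc (k+1) n, q i * u i) * bb x k :=
      sum_congr rfl fun k _ => mul_comm _ _
    rw [h1, ← sum_swap_aux n (fun i => q i * u i) (bb x)]
    apply sum_congr rfl
    intro i hi
    simp only [Finset.mem_Icc] at hi
    rw [hZbb i x hi.1]
    ring
  have hG' : ∀ x : ℝ, G x = (pbar * DD x - R x) / DD x := by
    intro x
    rw [hG x]
    have hnum : a * pbar + ∑ i ∈ Finset.Icc 1 n, q i * Z (i-1) x * (δ * V (N-i) (T-1))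
        = pbar * DD x - R x := by
      rw [hD_eq x, hR_eq x, mul_add, Finset.mul_sum, add_sub_assoc, ← Finset.sum_sub_distrib]
      have h1 : ∀ i ∈ Finset.Icc 1 n,
          pbar * (q i * Z (i-1) x) - q i * Z (i-1) x * u i
            = q i * Z (i-1) x * (δ * V (N-i) (T-1)) := by
        intro i _
        simp only [hu_def]
        ring
      rw [sum_congr rfl h1]
      ring
    rw [hnum, hD_eq x]
  have hD_pos : ∀ x : ℝ, 0 ≤ x → x ≤ 1 → 0 < DD x := by
    intro x hx hx1
    rw [hD_eq]
    apply add_pos_of_pos_of_nonneg htail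
    apply Finset.sum_nonneg
    intro i hi
    simp only [Finset.mem_Icc] at hi
    exact mul_nonneg (hqnn i) (hZ_nonneg i x hi.1 hx hx1)
  -- strict monotonicity
  have hGmono : StrictMonoOn G (Set.Icc (0:ℝ) 1) := by
    intro x hx y hy hxy
    rw [hG' x, hG' y, div_lt_div_iff₀ (hD_pos x hx.1 hx.2) (hD_pos y hy.1 hy.2)]
    have e1 : R y = ∑ k ∈ range (n+1), r k * bb y k := by
      simp only [hR_def]; exact sum_congr rfl fun k _ => mul_comm _ _
    have e2 : DD x = ∑ l ∈ range (n+1), dd l * bb x l := by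
      simp only [hDD_def]; exact sum_congr rfl fun k _ => mul_comm _ _
    have e3 : R x = ∑ k ∈ range (n+1), r k * bb x k := by
      simp only [hR_def]; exact sum_congr rfl fun k _ => mul_comm _ _
    have e4 : DD y = ∑ l ∈ range (n+1), dd l * bb y l := by
      simp only [hDD_def]; exact sum_congr rfl fun k _ => mul_comm _ _
    have key : R y * DD x < R x * DD y := by
      rw [e1, e2, e3, e4]
      refine key_ineq (n+1) (bb x) (bb y) r dd ?_ ?_ n 0 hn1 (by omega) ?_ ?_
      · intro l k hlk hk
        simp only [hbb_def]
        exact tp2 n l k hlk (by omega) x y hx.1 hy.2 hxy.le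
      · intro l k hlk _
        exact hrd_le l k hlk
      · have hrn : r n = 0 := by
          simp only [hr_def]
          rw [Finset.Icc_eq_empty (by omega), Finset.sum_empty]
        have hr0 : 0 < r 0 := by
          obtain ⟨j, hj1, hjn, hqjpos⟩ := hqj
          apply Finset.sum_pos'
          · intro i hi
            simp only [Finset.mem_Icc] at hi
            exact mul_nonneg (hqnn i) (hu_pos i hi.1 hi.2).le
          · exact ⟨j, Finset.mem_Icc.2 ⟨by omega, hjn⟩, mul_pos hqjpos (hu_pos j hj1 hjn)⟩
        rw [hrn, zero_mul]
        exact mul_pos hr0 (hdd_pos n)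
      · simp only [hbb_def, Nat.choose_self, Nat.choose_zero_right, Nat.sub_self, pow_zero,
          Nat.sub_zero, Nat.cast_one, one_mul, mul_one]
        rw [← mul_pow, ← mul_pow]
        have h1y : (0:ℝ) ≤ 1 - y := by linarith [hy.2]
        apply pow_lt_pow_left₀ _ _ (by omega)
        · nlinarith [hx.1, hy.2, hxy]
        · nlinarith [hx.1, hy.2, hxy]
    nlinarith [key]
  -- endpoint values
  have hG1 : G 1 = pbar := by
    rw [hG 1]
    have hZzero : ∀ i ∈ Finset.Icc 1 n, Z (i-1) (1:ℝ) = 0 := by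
      intro i hi; simp only [Finset.mem_Icc] at hi
      rw [hZ]
      apply Finset.sum_eq_zero
      intro k hk; simp only [Finset.mem_range] at hk
      have h1 : (1:ℝ) - 1 = 0 := by ring
      rw [h1, zero_pow (by omega : n - k ≠ 0)]
      ring
    have hs1 : ∑ i ∈ Finset.Icc 1 n, q i * Z (i-1) (1:ℝ) * (δ * V (N-i) (T-1)) = 0 :=
      Finset.sum_eq_zero fun i hi => by rw [hZzero i hi]; ring
    have hs2 : ∑ i ∈ Finset.Icc 1 n, q i * Z (i-1) (1:ℝ) = 0 :=
      Finset.sum_eq_zero fun i hi => by rw [hZzero i hi]; ring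
    rw [hs1, hs2, add_zero, add_zero, mul_comm, mul_div_assoc, div_self (ne_of_gt htail), mul_one]
  have hG0 : G 0 = Pstar := by
    rw [hG 0, hPstar]
    have hZone : ∀ i ∈ Finset.Icc 1 n, Z (i-1) (0:ℝ) = 1 := by
      intro i hi; simp only [Finset.mem_Icc] at hi
      rw [hZ]
      rw [Finset.sum_eq_single 0]
      · simp
      · intro k hk hkne
        rw [zero_pow hkne]; ring
      · intro h0; exact absurd (Finset.mem_range.2 (by omega)) h0
    have hnum : ∑ i ∈ Finset.Icc 1 n, q i * Z (i-1) (0:ℝ) * (δ * V (N-i) (T-1))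
        = ∑ i ∈ Finset.Icc 1 n, q i * δ * V (N-i) (T-1) :=
      sum_congr rfl fun i hi => by rw [hZone i hi]; ring
    have hden : ∑ i ∈ Finset.Icc 1 n, q i * Z (i-1) (0:ℝ) = ∑ i ∈ Finset.Icc 1 n, q i :=
      sum_congr rfl fun i hi => by rw [hZone i hi]; ring
    rw [hnum, hden]
    have hrange : Finset.range N = insert 0 (Finset.Icc 1 n) := by
      ext x; simp only [Finset.mem_range, Finset.mem_insert, Finset.mem_Icc]; omega
    have hVN := hVrec N T (by omega) hT
    rw [hrange, Finset.sum_insert (by simp)] at hVN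
    simp only [Nat.sub_zero] at hVN
    rw [← ha_def] at hVN
    have hden2 : 1 - q 0 = a + ∑ i ∈ Finset.Icc 1 n, q i := by
      have hs := hsum1 N
      rw [hrange, Finset.sum_insert (by simp), ← ha_def] at hs
      linarith
    rw [hden2]
    congr 1
    linarith [hVN]
  have hPlt : Pstar < pbar := by
    rw [← hG0, ← hG1]
    exact hGmono (Set.mem_Icc.2 ⟨le_refl 0, zero_le_one⟩) (Set.mem_Icc.2 ⟨zero_le_one, le_refl 1⟩)
      zero_lt_one
  -- continuity of G
  have hGcont : ContinuousOn G (Set.Icc (0:ℝ) 1) := by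
    have hbbcont : ∀ k, Continuous fun x : ℝ => bb x k := by
      intro k
      simp only [hbb_def]
      exact (continuous_const.mul ((continuous_const.sub continuous_id).pow _)).mul
        (continuous_pow k)
    set NumF : ℝ → ℝ := fun x => a * pbar
      + ∑ i ∈ Finset.Icc 1 n, q i * (∑ k ∈ range i, bb x k) * (δ * V (N-i) (T-1)) with hNumF
    set DenF : ℝ → ℝ := fun x => a + ∑ i ∈ Finset.Icc 1 n, q i * (∑ k ∈ range i, bb x k)
      with hDenF
    have hNumCont : Continuous NumF := by
      apply continuous_const.add
      apply continuous_finset_sum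
      intro i _
      exact (continuous_const.mul (continuous_finset_sum _ fun k _ => hbbcont k)).mul
        continuous_const
    have hDenCont : Continuous DenF := by
      apply continuous_const.add
      apply continuous_finset_sum
      intro i _
      exact continuous_const.mul (continuous_finset_sum _ fun k _ => hbbcont k)
    have hDen_eq_DD : ∀ x : ℝ, DenF x = DD x := by
      intro x
      simp only [hDenF]
      rw [hD_eq x]
      congr 1
      apply sum_congr rfl
      intro i hi
      simp only [Finset.mem_Icc] at hi
      rw [hZbb i x hi.1]
    have heqN : ∀ x : ℝ, a * pbar
        + ∑ i ∈ Finset.Icc 1 n, q i * Z (i - 1) x * (δ * V (N - i) (T - 1)) = NumF x := by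
      intro x
      simp only [hNumF]
      congr 1
      apply sum_congr rfl
      intro i hi
      simp only [Finset.mem_Icc] at hi
      rw [hZbb i x hi.1]
    have heqD : ∀ x : ℝ, a + ∑ i ∈ Finset.Icc 1 n, q i * Z (i - 1) x = DenF x := by
      intro x
      simp only [hDenF]
      congr 1
      apply sum_congr rfl
      intro i hi
      simp only [Finset.mem_Icc] at hi
      rw [hZbb i x hi.1]
    have heq : ∀ x ∈ Set.Icc (0:ℝ) 1, G x = NumF x / DenF x := by
      intro x _
      rw [hG x, heqN x, heqD x]
    exact (ContinuousOn.div hNumCont.continuousOn hDenCont.continuousOn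
      (fun x hx => by rw [hDen_eq_DD x]; exact (hD_pos x hx.1 hx.2).ne')).congr heq
  -- existence and uniqueness
  have hexists : ∀ p ∈ Set.Icc Pstar pbar, ∃ x ∈ Set.Icc (0:ℝ) 1, G x = p := by
    intro p hp
    have hIVT := intermediate_value_Icc (zero_le_one) hGcont
    have : p ∈ Set.Icc (G 0) (G 1) := by rw [hG0, hG1]; exact hp
    exact hIVT this
  have hGmem : ∀ x ∈ Set.Icc (0:ℝ) 1, G x ∈ Set.Icc Pstar pbar := by
    intro x hx
    constructor
    · rw [← hG0]
      exact hGmono.monotoneOn (Set.mem_Icc.2 ⟨le_refl 0, zero_le_one⟩) hx hx.1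
    · rw [← hG1]
      exact hGmono.monotoneOn hx (Set.mem_Icc.2 ⟨zero_le_one, le_refl 1⟩) hx.2
  -- the inverse
  set g : ℝ → ℝ := fun p => if h : ∃ x ∈ Set.Icc (0:ℝ) 1, G x = p then h.choose else 0
    with hg_def
  have hg_spec : ∀ p ∈ Set.Icc Pstar pbar, g p ∈ Set.Icc (0:ℝ) 1 ∧ G (g p) = p := by
    intro p hp
    have h := hexists p hp
    simp only [hg_def, dif_pos h]
    exact ⟨h.choose_spec.1, h.choose_spec.2⟩
  set Ginv : ℝ → ℝ := fun p => g (max Pstar (min p pbar)) with hGinv_def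
  have hclamp_mem : ∀ p : ℝ, max Pstar (min p pbar) ∈ Set.Icc Pstar pbar := by
    intro p
    exact ⟨le_max_left _ _, max_le hPlt.le (min_le_right _ _)⟩
  have hGinv_mem : ∀ p : ℝ, Ginv p ∈ Set.Icc (0:ℝ) 1 := fun p => (hg_spec _ (hclamp_mem p)).1
  have hclamp_id : ∀ p ∈ Set.Icc Pstar pbar, max Pstar (min p pbar) = p := by
    intro p hp
    rw [min_eq_left hp.2, max_eq_right hp.1]
  have hGinv_eq : ∀ p ∈ Set.Icc Pstar pbar, G (Ginv p) = p := by
    intro p hp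
    simp only [hGinv_def]
    rw [hclamp_id p hp]
    exact (hg_spec p hp).2
  have hGinv_mono : Monotone Ginv := by
    intro p p' hpp'
    simp only [hGinv_def]
    have hcc : max Pstar (min p pbar) ≤ max Pstar (min p' pbar) :=
      max_le_max le_rfl (min_le_min hpp' le_rfl)
    have h1 := hg_spec _ (hclamp_mem p)
    have h2 := hg_spec _ (hclamp_mem p')
    exact (hGmono.le_iff_le h1.1 h2.1).1 (by rw [h1.2, h2.2]; exact hcc)
  have hGinv_smono : StrictMonoOn Ginv (Set.Icc Pstar pbar) := by
    intro p hp p' hp' hpp'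
    exact (hGmono.lt_iff_lt (hGinv_mem p) (hGinv_mem p')).1
      (by rw [hGinv_eq p hp, hGinv_eq p' hp']; exact hpp')
  have hGinvG : ∀ x ∈ Set.Icc (0:ℝ) 1, Ginv (G x) = x := by
    intro x hx
    have h1 := hGinv_eq (G x) (hGmem x hx)
    exact hGmono.injOn (hGinv_mem (G x)) hx h1
  have hGinv_cont : Continuous Ginv := by
    have hmem : ∀ p, Ginv p ∈ Set.Icc (0:ℝ) 1 := hGinv_mem
    set Ginv' : ℝ → (Set.Icc (0:ℝ) 1) := fun p => ⟨Ginv p, hmem p⟩ with hGinv'_def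
    have hmono' : Monotone Ginv' := fun p p' h => Subtype.mk_le_mk.2 (hGinv_mono h)
    have hsurj' : Function.Surjective Ginv' := by
      rintro ⟨t, ht⟩
      exact ⟨G t, Subtype.ext (hGinvG t ht)⟩
    have hcont' : Continuous Ginv' := Monotone.continuous_of_surjective hmono' hsurj'
    have : Ginv = (fun z : (Set.Icc (0:ℝ) 1) => (z : ℝ)) ∘ Ginv' := rfl
    rw [this]
    exact continuous_subtype_val.comp hcont'
  -- assemble
  refine ⟨?_, Ginv, ?_, hGinv_cont.continuousOn, hGinv_smono, ?_, ?_⟩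
  · intro p hp
    obtain ⟨x, hx, hGx⟩ := hexists p hp
    refine ⟨x, ⟨hx, hGx⟩, ?_⟩
    rintro y ⟨hy, hGy⟩
    exact hGmono.injOn hy hx (by rw [hGx, hGy])
  · exact fun p hp => ⟨hGinv_mem p, hGinv_eq p hp⟩
  · refine ⟨fun p _ => hGinv_mem p, hGinv_smono.injOn, ?_⟩
    intro t ht
    exact ⟨G t, hGmem t ht, hGinvG t ht⟩
  · intro W hW0 hWmid hW1
    have hGinv_lo : ∀ p : ℝ, p ≤ Pstar → Ginv p = 0 := by
      intro p hp
      have hc : max Pstar (min p pbar) = Pstar := by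
        rw [min_eq_left (hp.trans hPlt.le), max_eq_left hp]
      have h0 : Ginv Pstar = 0 := by
        apply hGmono.injOn (hGinv_mem Pstar) (Set.mem_Icc.2 ⟨le_refl 0, zero_le_one⟩)
        rw [hGinv_eq Pstar (Set.mem_Icc.2 ⟨le_refl _, hPlt.le⟩), hG0]
      simp only [hGinv_def] at h0 ⊢
      rw [hc]
      rw [hclamp_id Pstar (Set.mem_Icc.2 ⟨le_refl _, hPlt.le⟩)] at h0
      exact h0
    have hGinv_hi : ∀ p : ℝ, pbar ≤ p → Ginv p = 1 := by
      intro p hp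
      have hc : max Pstar (min p pbar) = pbar := by
        rw [min_eq_right hp, max_eq_right hPlt.le]
      have h1 : Ginv pbar = 1 := by
        apply hGmono.injOn (hGinv_mem pbar) (Set.mem_Icc.2 ⟨zero_le_one, le_refl 1⟩)
        rw [hGinv_eq pbar (Set.mem_Icc.2 ⟨hPlt.le, le_refl _⟩), hG1]
      simp only [hGinv_def] at h1 ⊢
      rw [hc]
      rw [hclamp_id pbar (Set.mem_Icc.2 ⟨hPlt.le, le_refl _⟩)] at h1
      exact h1
    have hWeq : ∀ p : ℝ, W p = Ginv p := by
      intro p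
      rcases le_or_gt p Pstar with h | h
      · rw [hW0 p h, hGinv_lo p h]
      · rcases lt_or_ge p pbar with h' | h'
        · exact hWmid p h h'
        · rw [hW1 p h', hGinv_hi p h']
    constructor
    · intro p p' hpp'
      rw [hWeq p, hWeq p']
      exact hGinv_mono hpp'
    · intro p
      rw [hWeq p]
      exact ⟨(hGinv_mem p).1, (hGinv_mem p).2⟩
end

section
/- In the general demand oligopoly with N ≥ 2 sellers and T ≥ 1, assume a := Σ_{i≥N} q_i > 0. Then for every x ∈ [0,1] the following indifference identity holds: q₀·δ·V(N,T−1) + Σ_{i=1}^{N−1} q_i·(Z_{i−1,N}(x)·G(x) + (1 − Z_{i−1,N}(x))·δ·V(N−i, T−1)) + a·G(x) = V(N,T). In particular, when all N−1 opponents play the symmetric mixed strategy with distribution function G⁻¹, a seller's expected profit from posting any price p in the support equals V(N,T). -/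
/-! `G x` is the weighted average of `pbar` (weight `a`) and the continuation values
`δ V(N-i, T-1)` (weights `qᵢ Z_{i-1,N}(x)`), so putting `G x` in place of `pbar` and of each of
those values, with the same weights, leaves the expected payoff unchanged; that payoff is the
recursion for `V(N,T)` with its `i = 0` term split off. The weights are nonnegative on `[0,1]` and
`a > 0`, so the denominator of `G` does not vanish. -/

open Finset

lemma sum_choose_mul_pow_nonneg (s : Finset ℕ) (n : ℕ) {x : ℝ} (hx0 : 0 ≤ x) (hx1 : x ≤ 1) :
    0 ≤ ∑ i ∈ s, (n.choose i : ℝ) * (1 - x) ^ (n - i) * x ^ i :=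
  have : 0 ≤ 1 - x := sub_nonneg.mpr hx1
  sum_nonneg fun _ _ => by positivity

lemma sum_range_eq_add_sum_Icc {M : Type*} [AddCommMonoid M] (f : ℕ → M) {n : ℕ} (hn : 0 < n) :
    ∑ i ∈ range n, f i = f 0 + ∑ i ∈ Icc 1 (n - 1), f i := by
  rw [sum_range_eq_add_Ico f hn, Icc_sub_one_right_eq_Ico_of_not_isMin (by simpa using hn.ne')]

lemma sum_mul_mix_add_mul_eq_of_eq_weightedAverage {ι : Type*} (s : Finset ι) (q z v : ι → ℝ)
    (a p g : ℝ) (hden : a + ∑ i ∈ s, q i * z i ≠ 0)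
    (hg : g = (a * p + ∑ i ∈ s, q i * z i * v i) / (a + ∑ i ∈ s, q i * z i)) :
    ∑ i ∈ s, q i * (z i * g + (1 - z i) * v i) + a * g = ∑ i ∈ s, q i * v i + a * p := by
  have hkey : g * (a + ∑ i ∈ s, q i * z i) = a * p + ∑ i ∈ s, q i * z i * v i := by
    rw [hg, div_mul_cancel₀ _ hden]
  have hsplit : ∑ i ∈ s, q i * (z i * g + (1 - z i) * v i)
      = (∑ i ∈ s, q i * z i) * g + ∑ i ∈ s, q i * v i - ∑ i ∈ s, q i * z i * v i := by
    rw [sum_mul, ← sum_add_distrib, ← sum_sub_distrib]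
    exact sum_congr rfl fun i _ => by ring
  rw [hsplit]
  linarith

theorem stmt17_general (q : ℕ → ℝ) (δ pbar : ℝ)
    (hqnn : ∀ i, 0 ≤ q i)
    (V : ℕ → ℕ → ℝ)
    (hVrec : ∀ M T : ℕ, 1 ≤ M → 1 ≤ T →
      V M T = ∑ i ∈ Finset.range M, q i * δ * V (M - i) (T - 1) + (∑' i, q (M + i)) * pbar)
    (N T : ℕ) (hN : 2 ≤ N) (hT : 1 ≤ T)
    (htail : 0 < ∑' i, q (N + i))
    (Z : ℕ → ℝ → ℝ)
    (hZ : ∀ (j : ℕ) (x : ℝ), Z j x =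
      ∑ i ∈ Finset.range (j + 1), ((N - 1).choose i : ℝ) * (1 - x) ^ (N - 1 - i) * x ^ i)
    (G : ℝ → ℝ)
    (hG : ∀ x : ℝ, G x =
      ((∑' i, q (N + i)) * pbar +
        ∑ i ∈ Finset.Icc 1 (N - 1), q i * Z (i - 1) x * (δ * V (N - i) (T - 1))) /
      ((∑' i, q (N + i)) + ∑ i ∈ Finset.Icc 1 (N - 1), q i * Z (i - 1) x)) :
    ∀ x ∈ Set.Icc (0 : ℝ) 1,
      q 0 * δ * V N (T - 1) +
        ∑ i ∈ Finset.Icc 1 (N - 1),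
          q i * (Z (i - 1) x * G x + (1 - Z (i - 1) x) * (δ * V (N - i) (T - 1))) +
        (∑' i, q (N + i)) * G x = V N T := by
  rintro x ⟨hx0, hx1⟩
  have hweights : 0 ≤ ∑ i ∈ Icc 1 (N - 1), q i * Z (i - 1) x :=
    sum_nonneg fun i _ => mul_nonneg (hqnn i) (hZ _ x ▸ sum_choose_mul_pow_nonneg _ _ hx0 hx1)
  have hmix := sum_mul_mix_add_mul_eq_of_eq_weightedAverage (Icc 1 (N - 1)) q (fun i => Z (i - 1) x)
    (fun i => δ * V (N - i) (T - 1)) _ pbar (G x) (by positivity) (hG x)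
  rw [hVrec N T (by omega) hT, sum_range_eq_add_sum_Icc _ (by omega), add_assoc, hmix]
  simp only [Nat.sub_zero, mul_assoc, add_assoc]

/-- General demand oligopoly indifference identity: for every `x ∈ [0,1]`,
`q₀ δ V(N,T-1) + Σ_{i=1}^{N-1} qᵢ (Z_{i-1,N}(x) G(x) + (1 - Z_{i-1,N}(x)) δ V(N-i,T-1))
  + a G(x) = V(N,T)`, where `a = Σ_{i≥N} qᵢ`; so posting any price in the support of the
symmetric mixed strategy yields expected profit `V(N,T)`. -/
theorem stmt17 (q : ℕ → ℝ) (δ pbar : ℝ)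
    (hqnn : ∀ i, 0 ≤ q i) (hqsummable : Summable q) (hqsum : ∑' i, q i = 1)
    (hq0 : q 0 < 1) (hδ0 : 0 < δ) (hδ1 : δ ≤ 1) (hpbar : 0 < pbar)
    (V : ℕ → ℕ → ℝ)
    (hV0 : ∀ M : ℕ, 1 ≤ M → V M 0 = 0)
    (hVrec : ∀ M T : ℕ, 1 ≤ M → 1 ≤ T →
      V M T = ∑ i ∈ Finset.range M, q i * δ * V (M - i) (T - 1) + (∑' i, q (M + i)) * pbar)
    (N T : ℕ) (hN : 2 ≤ N) (hT : 1 ≤ T)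
    (htail : 0 < ∑' i, q (N + i))
    (Z : ℕ → ℝ → ℝ)
    (hZ : ∀ (j : ℕ) (x : ℝ), Z j x =
      ∑ i ∈ Finset.range (j + 1), ((N - 1).choose i : ℝ) * (1 - x) ^ (N - 1 - i) * x ^ i)
    (G : ℝ → ℝ)
    (hG : ∀ x : ℝ, G x =
      ((∑' i, q (N + i)) * pbar +
        ∑ i ∈ Finset.Icc 1 (N - 1), q i * Z (i - 1) x * (δ * V (N - i) (T - 1))) /
      ((∑' i, q (N + i)) + ∑ i ∈ Finset.Icc 1 (N - 1), q i * Z (i - 1) x)) :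
    ∀ x ∈ Set.Icc (0 : ℝ) 1,
      q 0 * δ * V N (T - 1) +
        ∑ i ∈ Finset.Icc 1 (N - 1),
          q i * (Z (i - 1) x * G x + (1 - Z (i - 1) x) * (δ * V (N - i) (T - 1))) +
        (∑' i, q (N + i)) * G x = V N T :=
  stmt17_general q δ pbar hqnn V hVrec N T hN hT htail Z hZ G hG
end
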